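/- arXiv:2410.21626 — 10 statements merged into one kernel-verified Lean document; each statement's English description precedes it below -/
import Mathlib

section
/- Let N ≥ 2 be a prime, k ≥ 2 an integer, a_1, ..., a_k pairwise distinct nonnegative integers, and c_1, ..., c_k integers not divisible by N. Then the sumset W = N^{a_1} c_1 {0,1,...,N-1} + N^{a_2} c_2 {0,1,...,N-1} + ... + N^{a_k} c_k {0,1,...,N-1} is a direct sum; that is, every element of W has a unique representation as a sum of one element from each set N^{a_i} c_i {0,1,...,N-1}. -/
/-- Lemma 3.6: for a prime `N ≥ 2`, pairwise distinct exponents `a i` and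
coefficients `c i` not divisible by `N`, the sumset
`∑ i, N^(a i) * c i * {0,…,N-1}` is a direct sum: the representation of each
element as such a sum is unique. -/
theorem stmt1 (N : ℕ) (hN : N.Prime) (k : ℕ) (hk : 2 ≤ k)
    (a : Fin k → ℕ) (ha : Function.Injective a)
    (c : Fin k → ℤ) (hc : ∀ i, ¬ (N : ℤ) ∣ c i) :
    ∀ l l' : Fin k → Fin N,
      (∑ i, (N : ℤ) ^ (a i) * c i * ((l i : ℕ) : ℤ)) =
        (∑ i, (N : ℤ) ^ (a i) * c i * ((l' i : ℕ) : ℤ)) → l = l' := by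
  intro l l' h
  by_contra hne
  set d : Fin k → ℤ := fun i => ((l i : ℕ) : ℤ) - ((l' i : ℕ) : ℤ) with hd
  have hD : ∑ i, (N:ℤ)^(a i) * c i * d i = 0 := by
    simp only [hd, mul_sub]
    rw [Finset.sum_sub_distrib, h, sub_self]
  set S := Finset.univ.filter (fun i => d i ≠ 0) with hS
  have hSne : S.Nonempty := by
    by_contra hemp
    apply hne
    funext i
    have hdi : d i = 0 := by
      by_contra hdi
      exact hemp ⟨i, by simp [hS, hdi]⟩
    have := sub_eq_zero.mp hdi
    exact Fin.ext (by exact_mod_cast this)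
  obtain ⟨i0, hi0S, hmin⟩ := S.exists_min_image a hSne
  have hDS : ∑ i ∈ S, (N:ℤ)^(a i) * c i * d i = 0 := by
    rw [← hD]
    apply Finset.sum_subset (Finset.subset_univ S)
    intro x _ hx
    have : d x = 0 := by simpa [hS] using hx
    simp [this]
  rw [← Finset.add_sum_erase S _ hi0S] at hDS
  have hdvd : ((N:ℤ)^(a i0) * (N:ℤ)) ∣ ∑ i ∈ S.erase i0, (N:ℤ)^(a i) * c i * d i := by
    apply Finset.dvd_sum
    intro j hj
    have hjS := Finset.mem_of_mem_erase hj
    have hjne : j ≠ i0 := Finset.ne_of_mem_erase hj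
    have hlt : a i0 < a j :=
      lt_of_le_of_ne (hmin j hjS) (fun e => hjne (ha e.symm))
    have : ((N:ℤ)^(a i0) * (N:ℤ)) ∣ (N:ℤ)^(a j) := by
      rw [← pow_succ]
      exact pow_dvd_pow _ hlt
    exact Dvd.dvd.mul_right (Dvd.dvd.mul_right this _) _
  have hdvd2 : ((N:ℤ)^(a i0) * (N:ℤ)) ∣ (N:ℤ)^(a i0) * (c i0 * d i0) := by
    have : (N:ℤ)^(a i0) * (c i0 * d i0) = - ∑ i ∈ S.erase i0, (N:ℤ)^(a i) * c i * d i := by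
      rw [← mul_assoc]; linarith
    rw [this]
    exact hdvd.neg_right
  have hprime : Prime (N:ℤ) := Nat.prime_iff_prime_int.mp hN
  have hNpos : ((N:ℤ))^(a i0) ≠ 0 := pow_ne_zero _ hprime.ne_zero
  have hdvd3 : (N:ℤ) ∣ c i0 * d i0 :=
    (mul_dvd_mul_iff_left hNpos).mp hdvd2
  rcases hprime.dvd_mul.mp hdvd3 with h1 | h2
  · exact hc i0 h1
  · have hd0 : d i0 ≠ 0 := by simpa [hS] using hi0S
    have habs : |d i0| < (N:ℤ) := by
      have h1 : ((l i0 : ℕ) : ℤ) < N := by exact_mod_cast (l i0).isLt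
      have h2 : ((l' i0 : ℕ) : ℤ) < N := by exact_mod_cast (l' i0).isLt
      have h3 : (0:ℤ) ≤ ((l i0 : ℕ) : ℤ) := Int.natCast_nonneg _
      have h4 : (0:ℤ) ≤ ((l' i0 : ℕ) : ℤ) := Int.natCast_nonneg _
      rw [abs_lt]; constructor <;> simp only [hd] <;> omega
    exact hd0 (Int.eq_zero_of_abs_lt_dvd h2 habs)
end

section
/- Let N ≥ 2 be a prime, a_1 < a_2 < ... < a_k nonnegative integers, and c_1, ..., c_k integers not divisible by N. Let D = ⊕_{i=1}^k N^{a_i} c_i {0,1,...,N-1}. Then there exists a finite set L ⊂ ℤ with 0 ∈ L such that D ⊕ L is a complete residue system modulo N^{a_k + 1}; in particular, D tiles the integers: D ⊕ (L ⊕ N^{a_k+1}ℤ) = ℤ. -/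
lemma digits_inj (N : ℕ) (hN : N.Prime) :
    ∀ (M : ℕ) (u : Fin M → ℤ), (∀ j, ¬ (N : ℤ) ∣ u j) →
    ∀ (d d' : Fin M → Fin N),
      ((N : ℤ) ^ M ∣ (∑ j : Fin M, (N : ℤ) ^ (j : ℕ) * u j * ((d j : ℕ) : ℤ)) -
        ∑ j : Fin M, (N : ℤ) ^ (j : ℕ) * u j * ((d' j : ℕ) : ℤ)) → d = d' := by
  intro M
  induction M with
  | zero => intro u hu d d' _h; exact funext fun j => j.elim0
  | succ M ih =>
    intro u hu d d' hdvd
    set R : ℤ := ∑ j : Fin M, (N : ℤ) ^ (j : ℕ) * u j.succ *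
      (((d j.succ : ℕ) : ℤ) - ((d' j.succ : ℕ) : ℤ)) with hR
    have hsplit : (N : ℤ) * R =
        (∑ j : Fin M, (N : ℤ) ^ (j : ℕ) * (N : ℤ) * u j.succ * ((d j.succ : ℕ) : ℤ)) -
        ∑ j : Fin M, (N : ℤ) ^ (j : ℕ) * (N : ℤ) * u j.succ * ((d' j.succ : ℕ) : ℤ) := by
      rw [hR, Finset.mul_sum, ← Finset.sum_sub_distrib]
      exact Finset.sum_congr rfl fun j _ => by ring
    have key : (∑ j : Fin (M+1), (N : ℤ) ^ (j : ℕ) * u j * ((d j : ℕ) : ℤ)) -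
        (∑ j : Fin (M+1), (N : ℤ) ^ (j : ℕ) * u j * ((d' j : ℕ) : ℤ)) =
        u 0 * (((d 0 : ℕ) : ℤ) - ((d' 0 : ℕ) : ℤ)) + (N : ℤ) * R := by
      rw [Fin.sum_univ_succ, Fin.sum_univ_succ]
      simp only [Fin.val_zero, pow_zero, Fin.val_succ, pow_succ]
      rw [hsplit]
      ring
    have hNn0 : (N : ℤ) ≠ 0 := by exact_mod_cast hN.ne_zero
    have hprime : Prime (N : ℤ) := Nat.prime_iff_prime_int.mp hN
    rw [key] at hdvd
    have hNdvd : (N : ℤ) ∣ u 0 * (((d 0 : ℕ) : ℤ) - ((d' 0 : ℕ) : ℤ)) := by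
      have h1 := dvd_trans (dvd_pow_self (N : ℤ) (Nat.succ_ne_zero M)) hdvd
      have h2 := dvd_sub h1 (Dvd.intro R rfl)
      simpa using h2
    have h0 : d 0 = d' 0 := by
      rcases hprime.dvd_mul.mp hNdvd with h | h
      · exact absurd h (hu 0)
      · have h1 := (d 0).2
        have h2 := (d' 0).2
        have habs : |((d 0 : ℕ) : ℤ)| < (N : ℤ) ∧ |((d' 0 : ℕ) : ℤ)| < (N : ℤ) := by
          constructor <;> (rw [abs_lt]; omega)
        have h3 : ((d 0 : ℕ) : ℤ) - ((d' 0 : ℕ) : ℤ) = 0 :=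
          Int.eq_zero_of_abs_lt_dvd h (by rw [abs_lt]; omega)
        exact Fin.ext (by omega)
    have hR' : (N : ℤ) ^ M ∣ R := by
      rw [h0, sub_self, mul_zero, zero_add, pow_succ'] at hdvd
      exact (mul_dvd_mul_iff_left hNn0).mp hdvd
    have hsub : R = (∑ j : Fin M, (N : ℤ) ^ (j : ℕ) * u j.succ * ((d j.succ : ℕ) : ℤ)) -
        ∑ j : Fin M, (N : ℤ) ^ (j : ℕ) * u j.succ * ((d' j.succ : ℕ) : ℤ) := by
      rw [hR, ← Finset.sum_sub_distrib]
      exact Finset.sum_congr rfl fun j _ => by ring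
    have htail := ih (fun j => u j.succ) (fun j => hu j.succ)
      (fun j => d j.succ) (fun j => d' j.succ) (hsub ▸ hR')
    funext j
    refine Fin.cases h0 (fun i => congrFun htail i) j

lemma key_bij (N : ℕ) (hN : N.Prime) (M : ℕ) (u : Fin M → ℤ) (hu : ∀ j, ¬ (N : ℤ) ∣ u j) :
    Function.Bijective (fun d : Fin M → Fin N =>
      (((∑ j : Fin M, (N : ℤ) ^ (j : ℕ) * u j * ((d j : ℕ) : ℤ)) : ℤ) : ZMod (N ^ M))) := by
  haveI : NeZero N := ⟨hN.ne_zero⟩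
  haveI : NeZero (N ^ M) := ⟨pow_ne_zero _ hN.ne_zero⟩
  rw [Fintype.bijective_iff_injective_and_card]
  refine ⟨?_, by simp [ZMod.card]⟩
  intro d d' h
  apply digits_inj N hN M u hu
  have h2 : (∑ j : Fin M, (N : ℤ) ^ (j : ℕ) * u j * ((d j : ℕ) : ℤ)) ≡
      (∑ j : Fin M, (N : ℤ) ^ (j : ℕ) * u j * ((d' j : ℕ) : ℤ)) [ZMOD ((N : ℤ) ^ M)] := by
    have := (ZMod.intCast_eq_intCast_iff _ _ (N ^ M)).mp h
    rwa [show (((N ^ M : ℕ) : ℤ)) = (N : ℤ) ^ M by push_cast; ring] at this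
  have h3 := Int.ModEq.dvd h2
  have h4 : ((N : ℤ) ^ M) ∣ (∑ j : Fin M, (N : ℤ) ^ (j : ℕ) * u j * ((d' j : ℕ) : ℤ)) -
      ∑ j : Fin M, (N : ℤ) ^ (j : ℕ) * u j * ((d j : ℕ) : ℤ) := by
    push_cast at h3; exact h3
  rw [← neg_sub]
  exact dvd_neg.mpr h4

/-- For a prime `N`, strictly increasing exponents `a 0 < a 1 < ⋯ < a n` and
coefficients `c i` not divisible by `N`, the direct sum
`D = ⊕ᵢ N^(a i) c i {0,…,N-1}` admits a finite set `L ∋ 0` such that `D ⊕ L` is a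
complete residue system modulo `N^(a n + 1)` (the first bijection, into
`ZMod (N^(a n + 1))`), and consequently `D ⊕ (L ⊕ N^(a n + 1)ℤ) = ℤ`
(the second bijection): `D` is an integer tile. -/
theorem stmt2 (N : ℕ) (hN : N.Prime) (n : ℕ)
    (a : Fin (n + 1) → ℕ) (ha : StrictMono a)
    (c : Fin (n + 1) → ℤ) (hc : ∀ i, ¬ (N : ℤ) ∣ c i) :
    ∃ L : Finset ℤ, (0 : ℤ) ∈ L ∧
      Function.Bijective (fun p : (Fin (n + 1) → Fin N) × L =>
        ((((∑ i, (N : ℤ) ^ (a i) * c i * ((p.1 i : ℕ) : ℤ)) + (p.2 : ℤ)) :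
          ℤ) : ZMod (N ^ (a (Fin.last n) + 1)))) ∧
      Function.Bijective (fun q : (Fin (n + 1) → Fin N) × L × ℤ =>
        (∑ i, (N : ℤ) ^ (a i) * c i * ((q.1 i : ℕ) : ℤ)) + (q.2.1 : ℤ) +
          (N : ℤ) ^ (a (Fin.last n) + 1) * q.2.2) := by
  classical
  haveI : NeZero N := ⟨hN.ne_zero⟩
  set M : ℕ := a (Fin.last n) + 1 with hMdef
  have haM : ∀ i, a i < M := fun i => Nat.lt_succ_of_le (ha.monotone (Fin.le_last i))
  set a' : Fin (n + 1) → Fin M := fun i => ⟨a i, haM i⟩ with ha'def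
  have ha'inj : Function.Injective a' := by
    intro i j h
    exact ha.injective (congrArg Fin.val h)
  set p : Fin M → Prop := fun j => ∃ i, a' i = j with hpdef
  set u : Fin M → ℤ := fun j => if h : p j then c h.choose else 1 with hudef
  have hu1 : ∀ i, u (a' i) = c i := by
    intro i
    have hpj : p (a' i) := ⟨i, rfl⟩
    simp only [hudef, dif_pos hpj]
    exact congrArg c (ha'inj hpj.choose_spec)
  have hu2 : ∀ j, ¬ p j → u j = 1 := by
    intro j h; simp only [hudef, dif_neg h]
  have huN : ∀ j, ¬ (N : ℤ) ∣ u j := by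
    intro j
    by_cases h : p j
    · simp only [hudef, dif_pos h]; exact hc _
    · rw [hu2 j h]
      intro hd
      have h1 : N ∣ 1 := by exact_mod_cast hd
      have h2 := Nat.le_of_dvd one_pos h1
      have h3 := hN.two_le
      omega
  set G : (Fin (n + 1) → Fin N) → ({j : Fin M // ¬ p j} → Fin N) → Fin M → Fin N :=
    fun f g j => if h : p j then f h.choose else g ⟨j, h⟩ with hGdef
  have hGa : ∀ f g i, G f g (a' i) = f i := by
    intro f g i
    have hpj : p (a' i) := ⟨i, rfl⟩
    simp only [hGdef, dif_pos hpj]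
    exact congrArg f (ha'inj hpj.choose_spec)
  have hGt : ∀ f g (t : {j : Fin M // ¬ p j}), G f g t.1 = g t := by
    intro f g t; simp only [hGdef, dif_neg t.2]
  -- the reindexing equivalence for positions in the range of a'
  obtain ⟨e, he⟩ : ∃ e : Fin (n + 1) ≃ {j : Fin M // p j}, ∀ i, (e i : Fin M) = a' i := by
    refine ⟨Equiv.ofBijective (fun i => ⟨a' i, ⟨i, rfl⟩⟩) ⟨?_, ?_⟩, fun i => rfl⟩
    · intro i j h
      exact ha'inj (congrArg Subtype.val h)
    · rintro ⟨j, i, rfl⟩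
      exact ⟨i, rfl⟩
  have hsum : ∀ f g, (∑ j : Fin M, (N : ℤ) ^ (j : ℕ) * u j * ((G f g j : ℕ) : ℤ)) =
      (∑ i, (N : ℤ) ^ (a i) * c i * ((f i : ℕ) : ℤ)) +
      ∑ t : {j : Fin M // ¬ p j}, (N : ℤ) ^ ((t : Fin M) : ℕ) * ((g t : ℕ) : ℤ) := by
    intro f g
    rw [← Fintype.sum_subtype_add_sum_subtype p
      (fun j : Fin M => (N : ℤ) ^ (j : ℕ) * u j * ((G f g j : ℕ) : ℤ))]
    congr 1
    · refine (Fintype.sum_equiv e _ _ ?_).symm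
      intro i
      rw [he i, hu1, hGa]
    · refine Finset.sum_congr rfl ?_
      intro t _
      rw [hu2 t.1 t.2, hGt]
      ring
  set sfun : ({j : Fin M // ¬ p j} → Fin N) → ℤ :=
    fun g => ∑ t : {j : Fin M // ¬ p j}, (N : ℤ) ^ ((t : Fin M) : ℕ) * ((g t : ℕ) : ℤ) with hsdef
  set L : Finset ℤ := Finset.image sfun Finset.univ with hLdef
  have hmemL : ∀ g, sfun g ∈ L := fun g => Finset.mem_image_of_mem _ (Finset.mem_univ g)
  have h0L : (0 : ℤ) ∈ L := by
    have h0 : sfun (fun _ => 0) = 0 := by simp [hsdef]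
    exact h0 ▸ hmemL _
  have hΦ := key_bij N hN M u huN
  have B1 : Function.Bijective (fun q : (Fin (n + 1) → Fin N) × L =>
      ((((∑ i, (N : ℤ) ^ (a i) * c i * ((q.1 i : ℕ) : ℤ)) + (q.2 : ℤ)) : ℤ) : ZMod (N ^ M))) := by
    constructor
    · rintro ⟨f, ℓ⟩ ⟨f', ℓ'⟩ hfe
      obtain ⟨g, -, hg⟩ := Finset.mem_image.mp ℓ.2
      obtain ⟨g', -, hg'⟩ := Finset.mem_image.mp ℓ'.2
      have h1 : (((∑ j : Fin M, (N : ℤ) ^ (j : ℕ) * u j * ((G f g j : ℕ) : ℤ)) : ℤ) : ZMod (N ^ M)) =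
          (((∑ j : Fin M, (N : ℤ) ^ (j : ℕ) * u j * ((G f' g' j : ℕ) : ℤ)) : ℤ) : ZMod (N ^ M)) := by
        rw [hsum, hsum]
        show (((_ + sfun g : ℤ)) : ZMod (N ^ M)) = (((_ + sfun g' : ℤ)) : ZMod (N ^ M))
        rw [hg, hg']
        exact hfe
      have h2 := hΦ.1 h1
      have hf : f = f' := funext fun i => by
        have h3 := congrFun h2 (a' i)
        rwa [hGa, hGa] at h3
      have hgg : g = g' := funext fun t => by
        have h3 := congrFun h2 t.1
        rwa [hGt, hGt] at h3
      have hℓ : ℓ = ℓ' := Subtype.ext (by rw [← hg, ← hg', hgg])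
      rw [hf, hℓ]
    · intro x
      obtain ⟨d, hd⟩ := hΦ.2 x
      set f : Fin (n + 1) → Fin N := fun i => d (a' i) with hfdef
      set g : {j : Fin M // ¬ p j} → Fin N := fun t => d t.1 with hgdef
      have hGfg : G f g = d := by
        funext j
        by_cases h : p j
        · obtain ⟨i, rfl⟩ := h
          rw [hGa]
        · exact hGt f g ⟨j, h⟩
      refine ⟨⟨f, ⟨sfun g, hmemL g⟩⟩, ?_⟩
      show ((((∑ i, (N : ℤ) ^ (a i) * c i * ((f i : ℕ) : ℤ)) + sfun g : ℤ)) : ZMod (N ^ M)) = x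
      rw [← hsum f g, hGfg]
      exact hd
  refine ⟨L, h0L, B1, ?_, ?_⟩
  · rintro ⟨f, ℓ, z⟩ ⟨f', ℓ', z'⟩ he
    dsimp only at he
    have hdvd : ((N ^ M : ℕ) : ℤ) ∣
        ((∑ i, (N : ℤ) ^ (a i) * c i * ((f' i : ℕ) : ℤ)) + (ℓ' : ℤ)) -
        ((∑ i, (N : ℤ) ^ (a i) * c i * ((f i : ℕ) : ℤ)) + (ℓ : ℤ)) := by
      refine ⟨z - z', ?_⟩
      push_cast
      linarith
    have hcast := B1.1 (a₁ := (f, ℓ)) (a₂ := (f', ℓ'))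
      ((ZMod.intCast_eq_intCast_iff _ _ _).mpr (Int.modEq_iff_dvd.mpr hdvd))
    have hf : f = f' := congrArg Prod.fst hcast
    have hℓ : ℓ = ℓ' := congrArg Prod.snd hcast
    have hz : z = z' := by
      rw [hf, hℓ] at he
      have h4 : (N : ℤ) ^ M * z = (N : ℤ) ^ M * z' := by linarith
      have hpowM : ((N : ℤ) ^ M) ≠ 0 := pow_ne_zero _ (by exact_mod_cast hN.ne_zero)
      exact mul_left_cancel₀ hpowM h4
    rw [hf, hℓ, hz]
  · intro x
    obtain ⟨⟨f, ℓ⟩, hfl⟩ := B1.2 ((x : ℤ) : ZMod (N ^ M))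
    have hdvd := Int.ModEq.dvd ((ZMod.intCast_eq_intCast_iff _ _ _).mp hfl)
    obtain ⟨z, hz⟩ := hdvd
    refine ⟨⟨f, ℓ, z⟩, ?_⟩
    dsimp only
    push_cast at hz
    linarith
end

section
/- Let N ≥ 2 be a prime and a ≥ 0 an integer, and let l_1, l_2 be integers not divisible by N. Then there does not exist a set L̄ ⊂ ℤ such that N^a {0,1,...,N-1} l_1 ⊕ N^a {0,1,...,N-1} l_2 ⊕ L̄ = ℤ (i.e., two equidifferent digit sets with the same power of N cannot appear jointly in a tiling direct-sum decomposition of ℤ). -/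
open Finset AddMonoidAlgebra

set_option linter.unusedSectionVars false


def cnt (T N : ℕ) (L₀ : Finset (ZMod T)) (c₁ c₂ : ℤ) (ζ : ZMod T) : ℕ :=
  ∑ i ∈ range N, ∑ j ∈ range N, ∑ ℓ ∈ L₀,
    if ζ = (((i : ℤ) * c₁ + (j : ℤ) * c₂ : ℤ) : ZMod T) + ℓ then 1 else 0

lemma cnt_swap (T N : ℕ) (L₀ : Finset (ZMod T)) (c₁ c₂ : ℤ) (ζ : ZMod T) :
    cnt T N L₀ c₁ c₂ ζ = cnt T N L₀ c₂ c₁ ζ := by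
  unfold cnt
  rw [Finset.sum_comm]
  refine Finset.sum_congr rfl fun j _ => Finset.sum_congr rfl fun i _ =>
    Finset.sum_congr rfl fun ℓ _ => ?_
  have : ((i : ℤ) * c₁ + (j : ℤ) * c₂ : ℤ) = ((j : ℤ) * c₂ + (i : ℤ) * c₁ : ℤ) := by ring
  rw [this]

lemma cnt_total (T N : ℕ) [NeZero T] (L₀ : Finset (ZMod T)) (c₁ c₂ : ℤ) :
    ∑ ζ : ZMod T, cnt T N L₀ c₁ c₂ ζ = N * N * L₀.card := by
  unfold cnt
  calc (∑ ζ : ZMod T, ∑ i ∈ range N, ∑ j ∈ range N, ∑ ℓ ∈ L₀,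
        if ζ = (((i : ℤ) * c₁ + (j : ℤ) * c₂ : ℤ) : ZMod T) + ℓ then 1 else 0)
      = ∑ i ∈ range N, ∑ j ∈ range N, ∑ ℓ ∈ L₀, ∑ ζ : ZMod T,
        (if ζ = (((i : ℤ) * c₁ + (j : ℤ) * c₂ : ℤ) : ZMod T) + ℓ then 1 else 0) := by
        rw [Finset.sum_comm]
        refine Finset.sum_congr rfl fun i _ => ?_
        rw [Finset.sum_comm]
        refine Finset.sum_congr rfl fun j _ => ?_
        rw [Finset.sum_comm]
    _ = ∑ i ∈ range N, ∑ j ∈ range N, ∑ ℓ ∈ L₀, (1:ℕ) := by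
        refine Finset.sum_congr rfl fun i _ => Finset.sum_congr rfl fun j _ =>
          Finset.sum_congr rfl fun ℓ _ => ?_
        rw [Finset.sum_ite_eq' Finset.univ]
        simp
    _ = N * N * L₀.card := by simp [mul_assoc]

section step
variable (T N p : ℕ) [NeZero T] (L₀ : Finset (ZMod T))

abbrev AA (T p : ℕ) := AddMonoidAlgebra (ZMod p) (ZMod T)

noncomputable def alp (c : ℤ) : AA T p :=
  ∑ i ∈ range N, AddMonoidAlgebra.single (((i : ℤ) * c : ℤ) : ZMod T) (1 : ZMod p)

noncomputable def bet : AA T p := ∑ ℓ ∈ L₀, AddMonoidAlgebra.single ℓ (1 : ZMod p)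

noncomputable def EE : AA T p := ∑ g : ZMod T, AddMonoidAlgebra.single g (1 : ZMod p)

lemma AA_sum_apply {ι : Type} (s : Finset ι) (f : ι → AA T p) (ζ : ZMod T) :
    (∑ i ∈ s, f i).coeff ζ = ∑ i ∈ s, (f i).coeff ζ := by
  classical
  induction s using Finset.induction with
  | empty => rfl
  | insert a s h ih => rw [Finset.sum_insert h, Finset.sum_insert h, AddMonoidAlgebra.coeff_add, Finsupp.add_apply, ih]

lemma mulSumSingle {ι κ : Type} (s : Finset ι) (t : Finset κ) (f : ι → ZMod T) (g : κ → ZMod T) :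
    ((∑ x ∈ s, AddMonoidAlgebra.single (f x) (1 : ZMod p)) *
      (∑ y ∈ t, AddMonoidAlgebra.single (g y) (1 : ZMod p)))
      = ∑ q ∈ s ×ˢ t, AddMonoidAlgebra.single (f q.1 + g q.2) (1 : ZMod p) := by
  rw [Finset.sum_product, Finset.sum_mul]
  apply Finset.sum_congr rfl
  intro x _
  rw [Finset.mul_sum]
  apply Finset.sum_congr rfl
  intro y _
  rw [AddMonoidAlgebra.single_mul_single, one_mul]

lemma coeff_eq (c₁ c₂ : ℤ) (ζ : ZMod T) :
    (alp T N p c₁ * alp T N p c₂ * bet T p L₀).coeff ζ = (cnt T N L₀ c₁ c₂ ζ : ZMod p) := by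
  have hr : ((cnt T N L₀ c₁ c₂ ζ : ℕ) : ZMod p) = ∑ q ∈ (range N ×ˢ range N) ×ˢ L₀,
      (if ζ = (((q.1.1 : ℤ) * c₁ + (q.1.2 : ℤ) * c₂ : ℤ) : ZMod T) + q.2 then (1:ZMod p) else 0) := by
    unfold cnt
    rw [Finset.sum_product, Finset.sum_product]
    push_cast
    rfl
  rw [hr]
  have expand : alp T N p c₁ * alp T N p c₂ * bet T p L₀ = ∑ q ∈ (range N ×ˢ range N) ×ˢ L₀,
      AddMonoidAlgebra.single
        (((((q.1.1 : ℤ) * c₁ : ℤ) : ZMod T) + (((q.1.2 : ℤ) * c₂ : ℤ) : ZMod T)) + q.2)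
        (1 : ZMod p) := by
    unfold alp bet
    rw [mulSumSingle, mulSumSingle]
  rw [expand, AA_sum_apply]
  apply Finset.sum_congr rfl
  intro q _
  rw [AddMonoidAlgebra.coeff_single_apply]
  refine if_congr ?_ rfl rfl
  rw [Int.cast_add]
  exact eq_comm

lemma EE_apply (ζ : ZMod T) : (EE T p).coeff ζ = 1 := by
  unfold EE
  rw [AA_sum_apply]
  simp only [AddMonoidAlgebra.coeff_single, Finsupp.single_apply]
  simp

lemma single_mul_EE (g : ZMod T) :
    AddMonoidAlgebra.single g (1 : ZMod p) * EE T p = EE T p := by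
  unfold EE
  rw [Finset.mul_sum]
  simp only [AddMonoidAlgebra.single_mul_single, one_mul]
  exact Fintype.sum_equiv (Equiv.addLeft g) _ _ (fun h => rfl)

lemma alp_mul_EE (c : ℤ) : alp T N p c * EE T p = (N : ZMod p) • EE T p := by
  unfold alp
  rw [Finset.sum_mul]
  have : ∀ i ∈ range N,
      AddMonoidAlgebra.single (((i : ℤ) * c : ℤ) : ZMod T) (1 : ZMod p) * EE T p = EE T p :=
    fun i _ => single_mul_EE T p _
  rw [Finset.sum_congr rfl this, Finset.sum_const, card_range, Nat.cast_smul_eq_nsmul]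

lemma alp_pow_mul_EE (c : ℤ) (k : ℕ) :
    alp T N p c ^ k * EE T p = ((N : ZMod p) ^ k) • EE T p := by
  induction k with
  | zero => simp
  | succ k ih =>
    rw [pow_succ, mul_assoc, alp_mul_EE, mul_smul_comm, ih, smul_smul, pow_succ, mul_comm ((N : ZMod p)) _]

lemma inv_eq_E (hp : p.Prime) (c₁ c₂ : ℤ)
    (h : ∀ ζ : ZMod T, cnt T N L₀ c₁ c₂ ζ = 1) :
    alp T N p c₁ * alp T N p c₂ * bet T p L₀ = EE T p := by
  apply AddMonoidAlgebra.ext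
  apply Finsupp.ext
  intro ζ
  rw [coeff_eq, EE_apply, h ζ, Nat.cast_one]

lemma alp_pow_p (hp : p.Prime) (c : ℤ) :
    alp T N p c ^ p = alp T N p ((p : ℤ) * c) := by
  haveI : Fact p.Prime := ⟨hp⟩
  haveI : CharP (AA T p) p :=
    charP_of_injective_ringHom (f := (AddMonoidAlgebra.singleZeroRingHom :
      ZMod p →+* AA T p)) (fun x y hxy => by
        simpa using congrArg (fun f => (f : AA T p).coeff 0) hxy) p
  haveI : ExpChar (AA T p) p := ExpChar.prime hp
  unfold alp
  rw [sum_pow_char]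
  apply Finset.sum_congr rfl
  intro i _
  rw [AddMonoidAlgebra.single_pow, one_pow]
  congr 1
  have : p • ((((i : ℤ) * c : ℤ)) : ZMod T) = ((p : ℤ) * ((i:ℤ) * c) : ℤ) := by
    push_cast
    rw [nsmul_eq_mul]
  rw [this]
  exact congrArg _ (by ring)

lemma cnt_step (hp : p.Prime) (hpN : ¬ p ∣ N) (c₁ c₂ : ℤ)
    (h : ∀ ζ : ZMod T, cnt T N L₀ c₁ c₂ ζ = 1) :
    ∀ ζ : ZMod T, cnt T N L₀ ((p : ℤ) * c₁) c₂ ζ = 1 := by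
  haveI : Fact p.Prime := ⟨hp⟩
  -- algebra identity
  have key : alp T N p ((p:ℤ) * c₁) * alp T N p c₂ * bet T p L₀ = EE T p := by
    rw [← alp_pow_p T N p hp c₁]
    have e1 : alp T N p c₁ ^ (p-1) * (alp T N p c₁ * alp T N p c₂ * bet T p L₀)
        = alp T N p c₁ ^ p * alp T N p c₂ * bet T p L₀ := by
      rw [← mul_assoc, ← mul_assoc, ← pow_succ, Nat.sub_add_cancel hp.one_le]
    calc alp T N p c₁ ^ p * alp T N p c₂ * bet T p L₀
        = alp T N p c₁ ^ (p-1) * (alp T N p c₁ * alp T N p c₂ * bet T p L₀) := e1.symm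
      _ = alp T N p c₁ ^ (p-1) * EE T p := by rw [inv_eq_E T N p L₀ hp c₁ c₂ h]
      _ = ((N : ZMod p) ^ (p-1)) • EE T p := alp_pow_mul_EE T N p c₁ (p-1)
      _ = EE T p := by
          rw [ZMod.pow_card_sub_one_eq_one (a := (N : ZMod p)) ?_, one_smul]
          intro h0
          exact hpN ((ZMod.natCast_eq_zero_iff N p).mp h0)
  -- counts ≡ 1 mod p
  have hmod : ∀ ζ : ZMod T, ((cnt T N L₀ ((p:ℤ) * c₁) c₂ ζ : ℕ) : ZMod p) = 1 := by
    intro ζ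
    rw [← coeff_eq, key, EE_apply]
  -- counts ≥ 1
  have hge : ∀ ζ : ZMod T, 1 ≤ cnt T N L₀ ((p:ℤ) * c₁) c₂ ζ := by
    intro ζ
    rcases Nat.eq_zero_or_pos (cnt T N L₀ ((p:ℤ) * c₁) c₂ ζ) with h0 | h1
    · exfalso
      have := hmod ζ
      rw [h0] at this
      simp at this
    · exact h1
  -- total count conservation
  have htot : ∑ ζ : ZMod T, cnt T N L₀ ((p:ℤ) * c₁) c₂ ζ = ∑ ζ : ZMod T, 1 := by
    rw [cnt_total]
    have := cnt_total T N L₀ c₁ c₂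
    rw [← this, Finset.sum_congr rfl (fun ζ _ => h ζ)]
  -- conclude
  intro ζ
  by_contra hne
  have hlt : 1 < cnt T N L₀ ((p:ℤ) * c₁) c₂ ζ := lt_of_le_of_ne (hge ζ) (Ne.symm hne)
  have : (∑ ζ : ZMod T, (1:ℕ)) < ∑ ζ : ZMod T, cnt T N L₀ ((p:ℤ) * c₁) c₂ ζ :=
    Finset.sum_lt_sum (fun ξ _ => hge ξ) ⟨ζ, Finset.mem_univ ζ, hlt⟩
  rw [htot] at this
  exact lt_irrefl _ this

end step


lemma tiling_periodic {ι₁ ι₂ : Type*} [Fintype ι₁] [Fintype ι₂] [Nonempty ι₁] [Nonempty ι₂]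
    (v : ι₁ → ι₂ → ℤ) (L : Set ℤ)
    (ht : ∀ z : ℤ, ∃! q : ι₁ × ι₂ × L, z = v q.1 q.2.1 + (q.2.2 : ℤ)) :
    ∃ T : ℕ, 0 < T ∧ ∀ z : ℤ, z ∈ L ↔ z + (T : ℤ) ∈ L := by
  classical
  set S : Finset ℤ := Finset.image (fun q : ι₁ × ι₂ => v q.1 q.2) Finset.univ with hS
  have hSne : S.Nonempty := ⟨v (Classical.arbitrary ι₁) (Classical.arbitrary ι₂),
    Finset.mem_image.mpr ⟨(Classical.arbitrary ι₁, Classical.arbitrary ι₂), Finset.mem_univ _, rfl⟩⟩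
  set vmax := S.max' hSne with hvmax
  set vmin := S.min' hSne with hvmin
  have hmemv : ∀ (k₁ : ι₁) (k₂ : ι₂), v k₁ k₂ ∈ S := fun k₁ k₂ =>
    Finset.mem_image.mpr ⟨(k₁, k₂), Finset.mem_univ _, rfl⟩
  obtain ⟨qmax, -, hqmax⟩ := Finset.mem_image.mp (S.max'_mem hSne)
  obtain ⟨qmin, -, hqmin⟩ := Finset.mem_image.mp (S.min'_mem hSne)
  have hminmax : vmin ≤ vmax := S.min'_le _ (S.max'_mem hSne)
  set W : ℕ := (vmax - vmin).toNat with hWdef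
  have hW : (W : ℤ) = vmax - vmin := Int.toNat_of_nonneg (by omega)
  -- forward characterization
  have char_fwd : ∀ y : ℤ, y ∈ L ↔
      ¬ ∃ d : ℤ, 1 ≤ d ∧ d ≤ (W:ℤ) ∧ (y - d) ∈ L ∧ ∃ (k₁ : ι₁) (k₂ : ι₂), v k₁ k₂ = vmin + d := by
    intro y
    constructor
    · rintro hy ⟨d, hd1, hdW, hdL, k₁, k₂, hk⟩
      obtain ⟨q, hq, hu⟩ := ht (y + vmin)
      have e1 : (qmin.1, qmin.2, (⟨y, hy⟩ : L)) = q :=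
        hu _ (by simp only; rw [hqmin]; ring)
      have e2 : (k₁, k₂, (⟨y - d, hdL⟩ : L)) = q :=
        hu _ (by simp only; rw [hk]; ring)
      have := congrArg (fun r : ι₁ × ι₂ × L => (r.2.2 : ℤ)) (e1.trans e2.symm)
      simp only at this
      omega
    · intro hno
      obtain ⟨⟨q1, q2, ℓ⟩, hq, -⟩ := ht (y + vmin)
      have hub : v q1 q2 ≤ vmax := S.le_max' _ (hmemv q1 q2)
      have hlb : vmin ≤ v q1 q2 := S.min'_le _ (hmemv q1 q2)
      set d : ℤ := v q1 q2 - vmin with hd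
      have hℓ : (ℓ : ℤ) = y - d := by simp only at hq; omega
      rcases eq_or_lt_of_le (show (0:ℤ) ≤ d by omega) with h0 | h1
      · have : y ∈ L := by
          have := ℓ.2
          rwa [show (ℓ : ℤ) = y by omega] at this
        exact this
      · exfalso
        apply hno
        refine ⟨d, by omega, by omega, ?_, q1, q2, by omega⟩
        have := ℓ.2
        rwa [hℓ] at this
  -- backward characterization
  have char_bwd : ∀ y : ℤ, y ∈ L ↔
      ¬ ∃ d : ℤ, 1 ≤ d ∧ d ≤ (W:ℤ) ∧ (y + d) ∈ L ∧ ∃ (k₁ : ι₁) (k₂ : ι₂), v k₁ k₂ = vmax - d := by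
    intro y
    constructor
    · rintro hy ⟨d, hd1, hdW, hdL, k₁, k₂, hk⟩
      obtain ⟨q, hq, hu⟩ := ht (y + vmax)
      have e1 : (qmax.1, qmax.2, (⟨y, hy⟩ : L)) = q :=
        hu _ (by simp only; rw [hqmax]; ring)
      have e2 : (k₁, k₂, (⟨y + d, hdL⟩ : L)) = q :=
        hu _ (by simp only; rw [hk]; ring)
      have := congrArg (fun r : ι₁ × ι₂ × L => (r.2.2 : ℤ)) (e1.trans e2.symm)
      simp only at this
      omega
    · intro hno
      obtain ⟨⟨q1, q2, ℓ⟩, hq, -⟩ := ht (y + vmax)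
      have hub : v q1 q2 ≤ vmax := S.le_max' _ (hmemv q1 q2)
      have hlb : vmin ≤ v q1 q2 := S.min'_le _ (hmemv q1 q2)
      set d : ℤ := vmax - v q1 q2 with hd
      have hℓ : (ℓ : ℤ) = y + d := by simp only at hq; omega
      rcases eq_or_lt_of_le (show (0:ℤ) ≤ d by omega) with h0 | h1
      · have : y ∈ L := by
          have := ℓ.2
          rwa [show (ℓ : ℤ) = y by omega] at this
        exact this
      · exfalso
        apply hno
        refine ⟨d, by omega, by omega, ?_, q1, q2, by omega⟩
        have := ℓ.2
        rwa [hℓ] at this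
  -- patterns
  set Pat : ℤ → ℤ → Prop :=
    fun z z' => ∀ e : ℤ, 0 ≤ e → e ≤ (W:ℤ) → ((z + e) ∈ L ↔ (z' + e) ∈ L) with hPat
  have pat_succ : ∀ z z', Pat z z' → Pat (z+1) (z'+1) := by
    intro z z' h e he heW
    rcases lt_or_eq_of_le heW with hlt | heq
    · have := h (e+1) (by omega) (by omega)
      constructor
      · intro hx; rw [show z' + 1 + e = z' + (e+1) by ring]; rw [show z + 1 + e = z + (e+1) by ring] at hx; tauto
      · intro hx; rw [show z + 1 + e = z + (e+1) by ring]; rw [show z' + 1 + e = z' + (e+1) by ring] at hx; tauto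
    · subst heq
      rw [char_fwd (z + 1 + (W:ℤ)), char_fwd (z' + 1 + (W:ℤ))]
      apply not_congr
      apply exists_congr
      intro d
      constructor
      · rintro ⟨h1, h2, h3, h4⟩
        refine ⟨h1, h2, ?_, h4⟩
        have := h ((W:ℤ) + 1 - d) (by omega) (by omega)
        rw [show z + ((W:ℤ)+1-d) = z + 1 + (W:ℤ) - d by ring] at this
        rw [show z' + ((W:ℤ)+1-d) = z' + 1 + (W:ℤ) - d by ring] at this
        tauto
      · rintro ⟨h1, h2, h3, h4⟩
        refine ⟨h1, h2, ?_, h4⟩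
        have := h ((W:ℤ) + 1 - d) (by omega) (by omega)
        rw [show z + ((W:ℤ)+1-d) = z + 1 + (W:ℤ) - d by ring] at this
        rw [show z' + ((W:ℤ)+1-d) = z' + 1 + (W:ℤ) - d by ring] at this
        tauto
  have pat_pred : ∀ z z', Pat z z' → Pat (z-1) (z'-1) := by
    intro z z' h e he heW
    rcases eq_or_lt_of_le he with heq | hlt
    · subst heq
      simp only [add_zero]
      rw [char_bwd (z - 1), char_bwd (z' - 1)]
      apply not_congr
      apply exists_congr
      intro d
      constructor
      · rintro ⟨h1, h2, h3, h4⟩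
        refine ⟨h1, h2, ?_, h4⟩
        have := h (d - 1) (by omega) (by omega)
        rw [show z + (d-1) = z - 1 + d by ring] at this
        rw [show z' + (d-1) = z' - 1 + d by ring] at this
        tauto
      · rintro ⟨h1, h2, h3, h4⟩
        refine ⟨h1, h2, ?_, h4⟩
        have := h (d - 1) (by omega) (by omega)
        rw [show z + (d-1) = z - 1 + d by ring] at this
        rw [show z' + (d-1) = z' - 1 + d by ring] at this
        tauto
    · have := h (e-1) (by omega) (by omega)
      rw [show z + (e-1) = z - 1 + e by ring] at this
      rw [show z' + (e-1) = z' - 1 + e by ring] at this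
      exact this
  -- pigeonhole
  set σ : ℤ → (Fin (W+1) → Prop) := fun z k => (z + ((k : ℕ) : ℤ)) ∈ L with hσdef
  obtain ⟨x, y, hxy, hσ⟩ := Finite.exists_ne_map_eq_of_infinite σ
  wlog hlt : x < y generalizing x y
  · exact this y x (Ne.symm hxy) hσ.symm (by omega)
  have hPatxy : Pat x y := by
    intro e he heW
    have heW' : e.toNat < W + 1 := by omega
    have := congrFun hσ ⟨e.toNat, heW'⟩
    simp only [hσdef] at this
    rw [show ((e.toNat : ℕ) : ℤ) = e from by omega] at this
    exact this.to_iff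
  have propagate : ∀ t : ℤ, Pat (x + t) (y + t) := by
    intro t
    induction t using Int.induction_on with
    | zero => simpa using hPatxy
    | succ t iht =>
      have := pat_succ _ _ iht
      rw [show x + (t+1) = x + t + 1 by ring, show y + ((t:ℤ)+1) = y + t + 1 by ring]
      exact this
    | pred t iht =>
      have := pat_pred _ _ iht
      rw [show x + (-(t:ℤ)-1) = x + -(t:ℤ) - 1 by ring, show y + (-(t:ℤ)-1) = y + -(t:ℤ) - 1 by ring]
      exact this
  refine ⟨(y - x).toNat, by omega, fun z => ?_⟩
  have := propagate (z - x) 0 le_rfl (by positivity)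
  rw [show x + (z - x) + 0 = z by ring, show y + (z - x) + 0 = z + (y - x) by ring] at this
  rw [show ((y - x).toNat : ℤ) = y - x from by omega]
  exact this

lemma cnt_muls (T N : ℕ) [NeZero T] (L₀ : Finset (ZMod T)) (hN : N.Prime) (c₂ : ℤ)
    (P : ℕ) (hP : 0 < P) (hNP : ¬ N ∣ P) :
    ∀ c₁ : ℤ, (∀ ζ : ZMod T, cnt T N L₀ c₁ c₂ ζ = 1) →
      ∀ ζ : ZMod T, cnt T N L₀ ((P : ℤ) * c₁) c₂ ζ = 1 := by
  induction P using Nat.strong_induction_on with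
  | _ P ih =>
    intro c₁ h
    by_cases h1 : P = 1
    · subst h1
      intro ζ
      rw [show ((1:ℕ):ℤ) * c₁ = c₁ by norm_num]
      exact h ζ
    · have hPne : P ≠ 0 := by omega
      set q := P.minFac with hqdef
      have hq : q.Prime := Nat.minFac_prime h1
      have hqd : q ∣ P := P.minFac_dvd
      set P' := P / q with hP'def
      have hqP' : q * P' = P := Nat.mul_div_cancel' hqd
      have hP'pos : 0 < P' := Nat.div_pos (Nat.le_of_dvd hP hqd) hq.pos
      have hP'dvd : P' ∣ P := Nat.div_dvd_of_dvd hqd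
      have hNP' : ¬ N ∣ P' := fun hd => hNP (hd.trans hP'dvd)
      have hlt : P' < P := Nat.div_lt_self hP hq.one_lt
      have hstep := ih P' hlt hP'pos hNP' c₁ h
      have hqN : ¬ q ∣ N := by
        intro hd
        exact hNP (((Nat.prime_dvd_prime_iff_eq hq hN).mp hd) ▸ hqd)
      have := cnt_step T N q L₀ hq hqN ((P':ℤ) * c₁) c₂ hstep
      have harg : (q:ℤ) * ((P':ℤ) * c₁) = (P:ℤ) * c₁ := by
        rw [← mul_assoc]
        norm_cast
        rw [hqP']
      rwa [harg] at this

/-- For a prime `N`, `a ≥ 0` and `l₁, l₂` integers not divisible by `N`, there is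
no set `L̄ ⊆ ℤ` with `N^a{0,…,N-1}l₁ ⊕ N^a{0,…,N-1}l₂ ⊕ L̄ = ℤ`: two equidifferent
digit sets with the same power of `N` cannot jointly appear in a tiling
direct-sum decomposition of `ℤ`. -/
theorem stmt3 (N : ℕ) (hN : N.Prime) (a : ℕ) (l₁ l₂ : ℤ)
    (h₁ : ¬ (N : ℤ) ∣ l₁) (h₂ : ¬ (N : ℤ) ∣ l₂) :
    ¬ ∃ L : Set ℤ, ∀ z : ℤ, ∃! p : Fin N × Fin N × L,
      z = (N : ℤ) ^ a * ((p.1 : ℕ) : ℤ) * l₁ + (N : ℤ) ^ a * ((p.2.1 : ℕ) : ℤ) * l₂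
        + (p.2.2 : ℤ) := by
  classical
  rintro ⟨L, h⟩
  have hN2 : 2 ≤ N := hN.two_le
  haveI : NeZero N := ⟨hN.ne_zero⟩
  set m : ℤ := (N : ℤ) ^ a with hm
  -- periodicity
  obtain ⟨T, hTpos, hper⟩ := tiling_periodic
    (fun (i j : Fin N) => m * ((i : ℕ) : ℤ) * l₁ + m * ((j : ℕ) : ℤ) * l₂) L h
  haveI : NeZero T := ⟨by omega⟩
  -- image of L in ZMod T
  set L₀ : Finset (ZMod T) :=
    Set.Finite.toFinset (Set.toFinite ((fun z : ℤ => (z : ZMod T)) '' L)) with hL₀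
  have hL₀mem : ∀ w : ℤ, w ∈ L → ((w : ZMod T) ∈ L₀) := by
    intro w hw
    rw [hL₀, Set.Finite.mem_toFinset]
    exact ⟨w, hw, rfl⟩
  -- closure under shifts by multiples of T
  have hshift : ∀ (k : ℤ) (w : ℤ), w ∈ L → w + k * T ∈ L := by
    intro k
    induction k using Int.induction_on with
    | zero => intro w hw; simpa using hw
    | succ k ihk =>
      intro w hw
      have := (hper (w + k * T)).mp (ihk w hw)
      rw [show w + ((k:ℤ)+1) * T = w + k * T + T by ring]
      exact this
    | pred k ihk =>
      intro w hw
      have := ihk w hw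
      have h2 := (hper (w + (-(k:ℤ)-1) * T)).mpr
      rw [show w + (-(k:ℤ)-1) * T + T = w + (-(k:ℤ)) * T by ring] at h2
      exact h2 this
  have hclosure : ∀ z : ℤ, (z : ZMod T) ∈ L₀ → z ∈ L := by
    intro z hz
    rw [hL₀, Set.Finite.mem_toFinset] at hz
    obtain ⟨w, hw, hwz⟩ := hz
    have hmod : (T : ℤ) ∣ z - w := by
      have : (w : ZMod T) = (z : ZMod T) := hwz
      have := (ZMod.intCast_eq_intCast_iff w z T).mp this
      exact Int.ModEq.dvd this
    obtain ⟨k, hk⟩ := hmod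
    have : z = w + k * T := by
      rw [show (w : ℤ) + k * T = w + T * k by ring]
      omega
    rw [this]
    exact hshift k w hw
  -- base invariant
  have base : ∀ ζ : ZMod T, cnt T N L₀ (m * l₁) (m * l₂) ζ = 1 := by
    intro ζ
    obtain ⟨z, rfl⟩ := ZMod.intCast_surjective ζ
    obtain ⟨⟨i₀, j₀, ℓ₀⟩, hq, hu⟩ := h z
    simp only at hq hu
    have hcnt_card : cnt T N L₀ (m * l₁) (m * l₂) ((z : ZMod T)) =
        (((range N ×ˢ range N) ×ˢ L₀).filter
          (fun q : (ℕ × ℕ) × ZMod T => (z : ZMod T) =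
            (((q.1.1 : ℤ) * (m * l₁) + (q.1.2 : ℤ) * (m * l₂) : ℤ) : ZMod T) + q.2)).card := by
      rw [Finset.card_filter]
      unfold cnt
      rw [Finset.sum_product, Finset.sum_product]
    rw [hcnt_card, Finset.card_eq_one]
    refine ⟨((i₀.val, j₀.val), ((ℓ₀ : ℤ) : ZMod T)), ?_⟩
    rw [Finset.eq_singleton_iff_unique_mem]
    constructor
    · rw [Finset.mem_filter]
      refine ⟨?_, ?_⟩
      · rw [Finset.mem_product]
        refine ⟨?_, hL₀mem _ ℓ₀.2⟩
        rw [Finset.mem_product]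
        exact ⟨Finset.mem_range.mpr i₀.isLt, Finset.mem_range.mpr j₀.isLt⟩
      · simp only
        rw [hq]
        push_cast
        ring
    · rintro ⟨⟨i, j⟩, lb⟩ hmem
      rw [Finset.mem_filter, Finset.mem_product] at hmem
      obtain ⟨⟨hij, hlb⟩, hcond⟩ := hmem
      rw [Finset.mem_product] at hij
      obtain ⟨hi, hj⟩ := hij
      rw [Finset.mem_range] at hi hj
      simp only at hcond hlb
      -- the integer w = z - (i*(m*l₁)+j*(m*l₂)) lies in L
      set w : ℤ := z - ((i : ℤ) * (m * l₁) + (j : ℤ) * (m * l₂)) with hwdef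
      have hwcast : (w : ZMod T) = lb := by
        rw [hwdef]
        push_cast
        rw [hcond]
        push_cast
        ring
      have hwL : w ∈ L := hclosure w (by rw [hwcast]; exact hlb)
      have hrep : z = m * ((i : ℤ)) * l₁ + m * ((j : ℤ)) * l₂ + w := by
        rw [hwdef]; ring
      have := hu (⟨i, hi⟩, ⟨j, hj⟩, ⟨w, hwL⟩) (by simpa using hrep)
      -- extract component equalities
      have hival : i = i₀.val := by
        have := congrArg (fun r : Fin N × Fin N × L => (r.1 : ℕ)) this
        simpa using this
      have hjval : j = j₀.val := by
        have := congrArg (fun r : Fin N × Fin N × L => (r.2.1 : ℕ)) this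
        simpa using this
      have hwval : w = (ℓ₀ : ℤ) := by
        have := congrArg (fun r : Fin N × Fin N × L => (r.2.2 : ℤ)) this
        simpa using this
      have : lb = ((ℓ₀ : ℤ) : ZMod T) := by rw [← hwcast, hwval]
      simp [hival, hjval, this]
  -- T = N * N * L₀.card
  have hTcard : T = N * N * L₀.card := by
    have h1 : ∑ ζ : ZMod T, cnt T N L₀ (m * l₁) (m * l₂) ζ = N * N * L₀.card :=
      cnt_total T N L₀ _ _
    have h2 : ∑ ζ : ZMod T, cnt T N L₀ (m * l₁) (m * l₂) ζ = T := by
      rw [Finset.sum_congr rfl (fun ζ _ => base ζ)]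
      simp [ZMod.card]
    omega
  have hNT : (N : ℕ) ∣ T := ⟨N * L₀.card, hTcard.trans (Nat.mul_assoc _ _ _)⟩
  have hNTz : (N : ℤ) ∣ (T : ℤ) := Int.natCast_dvd_natCast.mpr hNT
  -- define the multipliers P, Q
  set Pn : ℕ := (l₂ : ZMod T).val with hPn
  set Qn : ℕ := (l₁ : ZMod T).val with hQn
  have hPcastN : ((Pn : ℕ) : ZMod T) = ((l₂ : ℤ) : ZMod T) :=
    ZMod.natCast_rightInverse ((l₂ : ℤ) : ZMod T)
  have hQcastN : ((Qn : ℕ) : ZMod T) = ((l₁ : ℤ) : ZMod T) :=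
    ZMod.natCast_rightInverse ((l₁ : ℤ) : ZMod T)
  have hPcast : ((Pn : ℤ) : ZMod T) = ((l₂ : ℤ) : ZMod T) := by
    push_cast
    rw [hPcastN]
  have hQcast : ((Qn : ℤ) : ZMod T) = ((l₁ : ℤ) : ZMod T) := by
    push_cast
    rw [hQcastN]
  have hTdvdP : (T : ℤ) ∣ ((Pn : ℤ) - l₂) :=
    Int.ModEq.dvd ((ZMod.intCast_eq_intCast_iff _ _ _).mp hPcast.symm)
  have hTdvdQ : (T : ℤ) ∣ ((Qn : ℤ) - l₁) :=
    Int.ModEq.dvd ((ZMod.intCast_eq_intCast_iff _ _ _).mp hQcast.symm)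
  have hNP : ¬ N ∣ Pn := by
    intro hd
    apply h₂
    have h1 : (N : ℤ) ∣ (Pn : ℤ) := Int.natCast_dvd_natCast.mpr hd
    have h2 : (N : ℤ) ∣ ((Pn : ℤ) - l₂) := dvd_trans hNTz hTdvdP
    simpa using dvd_sub h1 h2
  have hNQ : ¬ N ∣ Qn := by
    intro hd
    apply h₁
    have h1 : (N : ℤ) ∣ (Qn : ℤ) := Int.natCast_dvd_natCast.mpr hd
    have h2 : (N : ℤ) ∣ ((Qn : ℤ) - l₁) := dvd_trans hNTz hTdvdQ
    simpa using dvd_sub h1 h2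
  have hPpos : 0 < Pn := by
    rcases Nat.eq_zero_or_pos Pn with h0 | h1
    · exfalso
      apply h₂
      have h2 : (N : ℤ) ∣ ((Pn : ℤ) - l₂) := dvd_trans hNTz hTdvdP
      rw [h0] at h2
      simpa using (dvd_neg.mpr (by simpa using h2) : (N:ℤ) ∣ -(0 - l₂))
    · exact h1
  have hQpos : 0 < Qn := by
    rcases Nat.eq_zero_or_pos Qn with h0 | h1
    · exfalso
      apply h₁
      have h2 : (N : ℤ) ∣ ((Qn : ℤ) - l₁) := dvd_trans hNTz hTdvdQ
      rw [h0] at h2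
      simpa using (dvd_neg.mpr (by simpa using h2) : (N:ℤ) ∣ -(0 - l₁))
    · exact h1
  -- iterate the Frobenius steps
  have inv1 : ∀ ζ : ZMod T, cnt T N L₀ ((Pn : ℤ) * (m * l₁)) (m * l₂) ζ = 1 :=
    cnt_muls T N L₀ hN (m * l₂) Pn hPpos hNP (m * l₁) base
  have inv1' : ∀ ζ : ZMod T, cnt T N L₀ (m * l₂) ((Pn : ℤ) * (m * l₁)) ζ = 1 :=
    fun ζ => (cnt_swap T N L₀ _ _ ζ).symm.trans (inv1 ζ)
  have inv2 : ∀ ζ : ZMod T, cnt T N L₀ ((Qn : ℤ) * (m * l₂)) ((Pn : ℤ) * (m * l₁)) ζ = 1 :=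
    cnt_muls T N L₀ hN _ Qn hQpos hNQ _ inv1'
  -- the two digit multipliers now agree mod T
  set c₁ : ℤ := (Qn : ℤ) * (m * l₂) with hc₁
  set c₂ : ℤ := (Pn : ℤ) * (m * l₁) with hc₂
  have hkey : ((c₁ : ℤ) : ZMod T) = ((c₂ : ℤ) : ZMod T) := by
    rw [hc₁, hc₂]
    push_cast
    rw [hQcastN, hPcastN]
    ring
  -- a distinguished element of L₀
  obtain ⟨⟨i', j', ℓ₀'⟩, -, -⟩ := h 0
  set lb₀ : ZMod T := ((ℓ₀' : ℤ) : ZMod T) with hlb₀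
  have hlb₀mem : lb₀ ∈ L₀ := hL₀mem _ ℓ₀'.2
  -- the witness point
  set ζs : ZMod T := (((1 : ℤ) * c₁ + (0 : ℤ) * c₂ : ℤ) : ZMod T) + lb₀ with hζs
  have hone := inv2 ζs
  -- lower bound 2 on the count
  have hcond1 : ζs = ((((1:ℕ) : ℤ) * c₁ + ((0:ℕ) : ℤ) * c₂ : ℤ) : ZMod T) + lb₀ := by
    rw [hζs]; norm_num
  have hcond2 : ζs = ((((0:ℕ) : ℤ) * c₁ + ((1:ℕ) : ℤ) * c₂ : ℤ) : ZMod T) + lb₀ := by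
    rw [hζs]
    push_cast
    rw [hkey]
    ring
  have hf0 : 1 ≤ ∑ j ∈ range N, ∑ ℓ ∈ L₀,
      (if ζs = ((((0:ℕ) : ℤ) * c₁ + (j : ℤ) * c₂ : ℤ) : ZMod T) + ℓ then 1 else 0) := by
    calc (1:ℕ) = ∑ ℓ ∈ ({lb₀} : Finset (ZMod T)),
        (if ζs = ((((0:ℕ) : ℤ) * c₁ + ((1:ℕ) : ℤ) * c₂ : ℤ) : ZMod T) + ℓ then 1 else 0) := by
          rw [Finset.sum_singleton, if_pos hcond2]
      _ ≤ ∑ ℓ ∈ L₀,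
        (if ζs = ((((0:ℕ) : ℤ) * c₁ + ((1:ℕ) : ℤ) * c₂ : ℤ) : ZMod T) + ℓ then 1 else 0) :=
          Finset.sum_le_sum_of_subset (Finset.singleton_subset_iff.mpr hlb₀mem)
      _ ≤ _ := Finset.single_le_sum (f := fun j => ∑ ℓ ∈ L₀,
          (if ζs = ((((0:ℕ) : ℤ) * c₁ + ((j:ℕ) : ℤ) * c₂ : ℤ) : ZMod T) + ℓ then 1 else 0))
          (fun _ _ => Nat.zero_le _) (Finset.mem_range.mpr (by omega))
  have hf1 : 1 ≤ ∑ j ∈ range N, ∑ ℓ ∈ L₀,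
      (if ζs = ((((1:ℕ) : ℤ) * c₁ + (j : ℤ) * c₂ : ℤ) : ZMod T) + ℓ then 1 else 0) := by
    calc (1:ℕ) = ∑ ℓ ∈ ({lb₀} : Finset (ZMod T)),
        (if ζs = ((((1:ℕ) : ℤ) * c₁ + ((0:ℕ) : ℤ) * c₂ : ℤ) : ZMod T) + ℓ then 1 else 0) := by
          rw [Finset.sum_singleton, if_pos hcond1]
      _ ≤ ∑ ℓ ∈ L₀,
        (if ζs = ((((1:ℕ) : ℤ) * c₁ + ((0:ℕ) : ℤ) * c₂ : ℤ) : ZMod T) + ℓ then 1 else 0) :=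
          Finset.sum_le_sum_of_subset (Finset.singleton_subset_iff.mpr hlb₀mem)
      _ ≤ _ := Finset.single_le_sum (f := fun j => ∑ ℓ ∈ L₀,
          (if ζs = ((((1:ℕ) : ℤ) * c₁ + ((j:ℕ) : ℤ) * c₂ : ℤ) : ZMod T) + ℓ then 1 else 0))
          (fun _ _ => Nat.zero_le _) (Finset.mem_range.mpr (by omega))
  have htwo : 2 ≤ cnt T N L₀ c₁ c₂ ζs := by
    unfold cnt
    have hsub : ({0, 1} : Finset ℕ) ⊆ range N := by
      intro x hx
      simp only [Finset.mem_insert, Finset.mem_singleton] at hx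
      rw [Finset.mem_range]
      omega
    calc (2:ℕ) = 1 + 1 := rfl
      _ ≤ (∑ j ∈ range N, ∑ ℓ ∈ L₀,
            (if ζs = ((((0:ℕ) : ℤ) * c₁ + (j : ℤ) * c₂ : ℤ) : ZMod T) + ℓ then 1 else 0))
          + (∑ j ∈ range N, ∑ ℓ ∈ L₀,
            (if ζs = ((((1:ℕ) : ℤ) * c₁ + (j : ℤ) * c₂ : ℤ) : ZMod T) + ℓ then 1 else 0)) :=
          Nat.add_le_add hf0 hf1
      _ = ∑ i ∈ ({0, 1} : Finset ℕ), ∑ j ∈ range N, ∑ ℓ ∈ L₀,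
            (if ζs = (((i : ℤ) * c₁ + (j : ℤ) * c₂ : ℤ) : ZMod T) + ℓ then 1 else 0) := by
          rw [Finset.sum_pair (by norm_num : (0:ℕ) ≠ 1)]
      _ ≤ _ := Finset.sum_le_sum_of_subset hsub
  rw [hone] at htwo
  omega
end

section
/- Let {b_k}, {N_k}, {t_k} be sequences of integers with |b_k| ≥ 2, N_k ≥ 2, |t_k| ≥ 1, and let D_k = {0,1,...,N_k−1} t_k. If Σ_{k=1}^∞ |N_k t_k / (b_1 b_2 ⋯ b_k)| < ∞, then the sequence of measures μ_m = δ_{b_1^{-1}D_1} ∗ δ_{(b_1 b_2)^{-1}D_2} ∗ ⋯ ∗ δ_{(b_1⋯b_m)^{-1}D_m} converges weakly to a Borel probability measure on ℝ. -/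
open MeasureTheory Filter
open scoped ENNReal Topology

/-- The uniform probability measure `δ_E` on a finite set `E ⊆ ℝ`. -/
noncomputable def unif (E : Finset ℝ) : Measure ℝ :=
  (E.card : ℝ≥0∞)⁻¹ • ∑ e ∈ E, Measure.dirac e

/-- Convolution of two measures on `ℝ`. -/
noncomputable def mconv (μ ν : Measure ℝ) : Measure ℝ :=
  (μ.prod ν).map fun p => p.1 + p.2

/-- The finite convolution `f 0 ∗ f 1 ∗ ⋯ ∗ f m`. -/
noncomputable def finConv (f : ℕ → Measure ℝ) : ℕ → Measure ℝ
  | 0 => f 0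
  | m + 1 => mconv (finConv f m) (f (m + 1))

namespace Stmt6Aux

variable {α β : Type*} [MeasurableSpace α] [MeasurableSpace β]

lemma sfinite_sum {ι : Type*} (s : Finset ι) (μ : ι → Measure α) (h : ∀ i, SFinite (μ i)) :
    SFinite (∑ i ∈ s, μ i) := by
  classical
  induction s using Finset.cons_induction with
  | empty => simpa using inferInstanceAs (SFinite (0 : Measure α))
  | cons a s ha ih =>
    rw [Finset.sum_cons]
    haveI := ih
    haveI := h a
    infer_instance

lemma smul_prod (c : ℝ≥0∞) (μ : Measure α) (ν : Measure β) [SFinite μ] [SFinite ν] :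
    (c • μ).prod ν = c • (μ.prod ν) := by
  ext s hs
  rw [Measure.prod_apply hs, Measure.smul_apply, Measure.prod_apply hs,
    lintegral_smul_measure, smul_eq_mul]

lemma prod_smul (c : ℝ≥0∞) (μ : Measure α) (ν : Measure β) [SFinite μ] [SFinite ν] :
    μ.prod (c • ν) = c • (μ.prod ν) := by
  ext s hs
  rw [Measure.prod_apply hs, Measure.smul_apply, Measure.prod_apply hs, smul_eq_mul,
    ← lintegral_const_mul _ (measurable_measure_prodMk_left hs)]
  simp

lemma sum_prod {ι : Type*} (s : Finset ι) (μ : ι → Measure α) (ν : Measure β)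
    [SFinite ν] (h : ∀ i, SFinite (μ i)) :
    (∑ i ∈ s, μ i).prod ν = ∑ i ∈ s, (μ i).prod ν := by
  classical
  induction s using Finset.cons_induction with
  | empty => simp [Measure.zero_prod]
  | cons a s ha ih =>
    haveI := sfinite_sum s μ h
    haveI := h a
    rw [Finset.sum_cons, Measure.add_prod, ih, Finset.sum_cons]

lemma map_finsetSum {ι : Type*} (s : Finset ι) (μ : ι → Measure α) {f : α → β}
    (hf : Measurable f) :
    (∑ i ∈ s, μ i).map f = ∑ i ∈ s, (μ i).map f := by
  classical
  induction s using Finset.cons_induction with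
  | empty => simp [Measure.map_zero]
  | cons a s ha ih =>
    rw [Finset.sum_cons, Measure.map_add _ _ hf, ih, Finset.sum_cons]

lemma sum_range_mul {M : Type*} [AddCommMonoid M] (n p : ℕ) (hp : 0 < p) (F : ℕ → ℕ → M) :
    ∑ r ∈ Finset.range (n * p), F (r / p) (r % p)
      = ∑ x ∈ Finset.range n, ∑ y ∈ Finset.range p, F x y := by
  rw [← Finset.sum_product']
  refine Finset.sum_nbij' (i := fun r => (r / p, r % p)) (j := fun x => x.1 * p + x.2) ?_ ?_ ?_ ?_ ?_
  · intro r hr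
    simp only [Finset.mem_range] at hr
    simp only [Finset.mem_product, Finset.mem_range]
    exact ⟨(Nat.div_lt_iff_lt_mul hp).2 hr, Nat.mod_lt _ hp⟩
  · intro x hx
    simp only [Finset.mem_product, Finset.mem_range] at hx
    simp only [Finset.mem_range]
    calc x.1 * p + x.2 < x.1 * p + p := by omega
    _ = (x.1 + 1) * p := by ring
    _ ≤ n * p := Nat.mul_le_mul_right _ hx.1
  · intro r hr
    exact Nat.div_add_mod' r p
  · intro x hx
    simp only [Finset.mem_product, Finset.mem_range] at hx
    have h1 : (x.1 * p + x.2) / p = x.1 := by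
      rw [mul_comm, Nat.mul_add_div hp, Nat.div_eq_of_lt hx.2, add_zero]
    have h2 : (x.1 * p + x.2) % p = x.2 := by
      rw [mul_comm, Nat.mul_add_mod, Nat.mod_eq_of_lt hx.2]
    simp [h1, h2]
  · intro r hr; rfl

lemma mconv_discrete (n p : ℕ) (hp : 0 < p) (a c : ℝ≥0∞) (u v : ℕ → ℝ) :
    mconv (a • ∑ r ∈ Finset.range n, Measure.dirac (u r))
          (c • ∑ j ∈ Finset.range p, Measure.dirac (v j))
      = (a * c) • ∑ r ∈ Finset.range (n * p),
          Measure.dirac (u (r / p) + v (r % p)) := by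
  haveI h1 : SFinite (∑ r ∈ Finset.range n, Measure.dirac (u r)) :=
    sfinite_sum _ _ fun _ => inferInstance
  haveI h2 : SFinite (∑ j ∈ Finset.range p, Measure.dirac (v j)) :=
    sfinite_sum _ _ fun _ => inferInstance
  have hadd : Measurable fun q : ℝ × ℝ => q.1 + q.2 := measurable_add
  unfold mconv
  rw [smul_prod, prod_smul, smul_smul,
    sum_prod _ _ _ (fun _ => inferInstance), Measure.map_smul]
  congr 1
  have hprod : ∀ r : ℕ,
      (Measure.dirac (u r)).prod (∑ j ∈ Finset.range p, Measure.dirac (v j))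
        = ∑ j ∈ Finset.range p, Measure.dirac ((u r, v j)) := by
    intro r
    rw [Measure.dirac_prod, map_finsetSum _ _ measurable_prodMk_left]
    exact Finset.sum_congr rfl fun j _ => Measure.map_dirac' measurable_prodMk_left _
  calc ((∑ r ∈ Finset.range n,
        (Measure.dirac (u r)).prod (∑ j ∈ Finset.range p, Measure.dirac (v j))).map
          fun q : ℝ × ℝ => q.1 + q.2)
      = ∑ r ∈ Finset.range n, ∑ j ∈ Finset.range p, Measure.dirac (u r + v j) := by
        rw [map_finsetSum _ _ hadd]
        refine Finset.sum_congr rfl fun r _ => ?_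
        rw [hprod r, map_finsetSum _ _ hadd]
        exact Finset.sum_congr rfl fun j _ => Measure.map_dirac' hadd _
    _ = ∑ r ∈ Finset.range (n * p), Measure.dirac (u (r / p) + v (r % p)) :=
        (sum_range_mul n p hp fun x y => Measure.dirac (u x + v y)).symm

lemma unif_image (N : ℕ) (hN : 0 < N) (φ : ℕ → ℝ)
    (hφ : ∀ x ∈ Finset.range N, ∀ y ∈ Finset.range N, φ x = φ y → x = y) :
    unif ((Finset.range N).image φ)
      = ((N : ℝ≥0∞))⁻¹ • ∑ j ∈ Finset.range N, Measure.dirac (φ j) := by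
  unfold unif
  rw [Finset.card_image_of_injOn hφ, Finset.card_range,
    Finset.sum_image hφ]

end Stmt6Aux

section Main

open Stmt6Aux

variable (b t : ℕ → ℤ) (Nk : ℕ → ℕ)

/-- `P k = b 0 ⋯ b k` as a real number. -/
noncomputable def Pr (k : ℕ) : ℝ := ∏ i ∈ Finset.range (k + 1), (b i : ℝ)

/-- the atom `j t_k / P_k`. -/
noncomputable def xk (k j : ℕ) : ℝ := ((j : ℝ) * (t k : ℝ)) / Pr b k

/-- `Q m = N 0 ⋯ N m`. -/
def Qn (m : ℕ) : ℕ := ∏ i ∈ Finset.range (m + 1), Nk i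

/-- mixed-radix digit. -/
def dig (m k r : ℕ) : ℕ := r / (Qn Nk m / Qn Nk k) % Nk k

/-- value of the `r`-th atom of the `m`-th convolution. -/
noncomputable def sval (m r : ℕ) : ℝ := ∑ k ∈ Finset.range (m + 1), xk b t k (dig Nk m k r)

/-- the `k`-th digit map on `[0,1)`. -/
noncomputable def term (k : ℕ) (x : ℝ) : ℝ := xk b t k (⌊x * (Qn Nk k : ℝ)⌋₊ % Nk k)


variable {b t : ℕ → ℤ} {Nk : ℕ → ℕ}

lemma b_ne_zero (hb : ∀ k, 2 ≤ |b k|) (k : ℕ) : b k ≠ 0 := by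
  intro h0
  have := hb k
  rw [h0] at this
  simp at this

lemma Pr_ne_zero (hb : ∀ k, 2 ≤ |b k|) (k : ℕ) : Pr b k ≠ 0 := by
  unfold Pr
  rw [Finset.prod_ne_zero_iff]
  intro i _
  exact_mod_cast Int.cast_ne_zero.2 (b_ne_zero hb i)

lemma t_ne_zero (ht : ∀ k, 1 ≤ |t k|) (k : ℕ) : (t k : ℝ) ≠ 0 := by
  have : t k ≠ 0 := by
    intro h0
    have := ht k
    rw [h0] at this
    simp at this
  exact_mod_cast Int.cast_ne_zero.2 this

lemma Qn_pos (hN : ∀ k, 2 ≤ Nk k) (m : ℕ) : 0 < Qn Nk m :=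
  Finset.prod_pos fun i _ => by have := hN i; omega

lemma Qn_dvd {k m : ℕ} (hkm : k ≤ m) : Qn Nk k ∣ Qn Nk m :=
  Finset.prod_dvd_prod_of_subset _ _ _ (by
    intro i hi
    simp only [Finset.mem_range] at hi ⊢
    omega)

lemma nu_eq (hb : ∀ k, 2 ≤ |b k|) (hN : ∀ k, 2 ≤ Nk k) (ht : ∀ k, 1 ≤ |t k|) (k : ℕ) :
    unif ((Finset.range (Nk k)).image fun j : ℕ =>
        ((j : ℝ) * (t k : ℝ)) / ∏ i ∈ Finset.range (k + 1), (b i : ℝ))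
      = ((Nk k : ℝ≥0∞))⁻¹ • ∑ j ∈ Finset.range (Nk k), Measure.dirac (xk b t k j) := by
  refine unif_image (Nk k) (by have := hN k; omega) _ ?_
  intro x _ y _ hxy
  have hP := Pr_ne_zero hb k
  have hT := t_ne_zero ht k
  have hxy' : (x : ℝ) * (t k : ℝ) / Pr b k = (y : ℝ) * (t k : ℝ) / Pr b k := hxy
  have h2 : (x : ℝ) * (t k : ℝ) = (y : ℝ) * (t k : ℝ) := by
    rw [div_eq_div_iff hP hP] at hxy'
    exact mul_right_cancel₀ hP hxy'
  have : (x : ℝ) = y := mul_right_cancel₀ hT h2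
  exact_mod_cast this

lemma dig_succ_top (hN : ∀ k, 2 ≤ Nk k) (m r : ℕ) :
    dig Nk (m + 1) (m + 1) r = r % Nk (m + 1) := by
  unfold dig
  rw [Nat.div_self (Qn_pos hN (m + 1)), Nat.div_one]

lemma Qn_succ (m : ℕ) : Qn Nk (m + 1) = Qn Nk m * Nk (m + 1) :=
  Finset.prod_range_succ _ _

lemma dig_succ (hN : ∀ k, 2 ≤ Nk k) {k m : ℕ} (hkm : k ≤ m) (r : ℕ) :
    dig Nk (m + 1) k r = dig Nk m k (r / Nk (m + 1)) := by
  unfold dig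
  have hdvd : Qn Nk k ∣ Qn Nk m := Qn_dvd hkm
  have hQ : Qn Nk (m + 1) / Qn Nk k = Qn Nk m / Qn Nk k * Nk (m + 1) := by
    rw [Qn_succ, mul_comm (Qn Nk m), Nat.mul_div_assoc _ hdvd, mul_comm]
  rw [hQ, mul_comm, ← Nat.div_div_eq_div_mul]

lemma sval_succ (hN : ∀ k, 2 ≤ Nk k) (m r : ℕ) :
    sval b t Nk (m + 1) r
      = sval b t Nk m (r / Nk (m + 1)) + xk b t (m + 1) (r % Nk (m + 1)) := by
  unfold sval
  rw [Finset.sum_range_succ, dig_succ_top hN]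
  congr 1
  refine Finset.sum_congr rfl fun k hk => ?_
  rw [dig_succ hN (by simpa [Nat.lt_succ_iff] using hk)]

lemma finConv_eq (hb : ∀ k, 2 ≤ |b k|) (hN : ∀ k, 2 ≤ Nk k) (ht : ∀ k, 1 ≤ |t k|) (m : ℕ) :
    finConv (fun k =>
        unif ((Finset.range (Nk k)).image fun j : ℕ =>
          ((j : ℝ) * (t k : ℝ)) / ∏ i ∈ Finset.range (k + 1), (b i : ℝ))) m
      = ((Qn Nk m : ℝ≥0∞))⁻¹ • ∑ r ∈ Finset.range (Qn Nk m),
          Measure.dirac (sval b t Nk m r) := by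
  induction m with
  | zero =>
    rw [show ∀ f : ℕ → Measure ℝ, finConv f 0 = f 0 from fun _ => rfl, nu_eq hb hN ht 0]
    have hq : Qn Nk 0 = Nk 0 := by simp [Qn]
    rw [hq]
    congr 1
    refine Finset.sum_congr rfl fun r hr => ?_
    simp only [Finset.mem_range] at hr
    congr 1
    unfold sval
    rw [Finset.sum_range_one]
    congr 1
    unfold dig
    rw [Nat.div_self (Qn_pos hN 0), Nat.div_one, Nat.mod_eq_of_lt hr]
  | succ m ih =>
    have hNp : 0 < Nk (m + 1) := by have := hN (m + 1); omega
    rw [show ∀ f : ℕ → Measure ℝ, finConv f (m+1) = mconv (finConv f m) (f (m+1)) from fun _ => rfl, ih,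
      nu_eq hb hN ht (m + 1), mconv_discrete _ _ hNp]
    have hq := Qn_succ (Nk := Nk) m
    have hsc : ((Qn Nk m : ℝ≥0∞))⁻¹ * ((Nk (m + 1) : ℝ≥0∞))⁻¹
        = ((Qn Nk (m + 1) : ℝ≥0∞))⁻¹ := by
      rw [hq, Nat.cast_mul, ENNReal.mul_inv (Or.inl (Nat.cast_ne_zero.2 (Qn_pos hN m).ne')) (Or.inl (ENNReal.natCast_ne_top _))]
    rw [hsc, ← hq]
    congr 1
    refine Finset.sum_congr rfl fun r hr => ?_
    rw [sval_succ hN]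

lemma floor_digit (hN : ∀ k, 2 ≤ Nk k) {k m : ℕ} (hkm : k ≤ m) (x : ℝ) :
    ⌊x * (Qn Nk k : ℝ)⌋₊ = ⌊x * (Qn Nk m : ℝ)⌋₊ / (Qn Nk m / Qn Nk k) := by
  have hdvd : Qn Nk k ∣ Qn Nk m := Qn_dvd hkm
  have hd : Qn Nk k * (Qn Nk m / Qn Nk k) = Qn Nk m := Nat.mul_div_cancel' hdvd
  have hd0 : 0 < Qn Nk m / Qn Nk k := by
    have := Qn_pos hN m
    rcases Nat.eq_zero_or_pos (Qn Nk m / Qn Nk k) with h | h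
    · rw [h, mul_zero] at hd; omega
    · exact h
  rw [← Nat.floor_div_natCast (x * (Qn Nk m : ℝ)) (Qn Nk m / Qn Nk k)]
  set d := Qn Nk m / Qn Nk k with hdd
  congr 1
  have hdR : ((d : ℕ) : ℝ) ≠ 0 := by positivity
  rw [← hd]
  push_cast
  rw [show x * ((Qn Nk k : ℝ) * (d : ℝ)) / (d : ℝ)
      = x * (Qn Nk k : ℝ) * ((d : ℝ) / (d : ℝ)) by ring, div_self hdR, mul_one]

lemma G_eq (hN : ∀ k, 2 ≤ Nk k) (m : ℕ) (x : ℝ) :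
    ∑ k ∈ Finset.range (m + 1), term b t Nk k x
      = sval b t Nk m ⌊x * (Qn Nk m : ℝ)⌋₊ := by
  unfold sval term dig
  refine Finset.sum_congr rfl fun k hk => ?_
  simp only [Finset.mem_range, Nat.lt_succ_iff] at hk
  rw [floor_digit hN hk]

lemma floor_mem_Ico {Q r : ℕ} (hQ : 0 < Q) {x : ℝ}
    (h1 : (r : ℝ) / Q ≤ x) (h2 : x < ((r : ℝ) + 1) / Q) : ⌊x * (Q : ℝ)⌋₊ = r := by
  have hQR : (0 : ℝ) < Q := by exact_mod_cast hQ
  have hx0 : 0 ≤ x := le_trans (by positivity) h1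
  rw [Nat.floor_eq_iff (by positivity)]
  constructor
  · calc (r : ℝ) = (r / Q) * Q := by field_simp
    _ ≤ x * Q := by gcongr
  · calc x * Q < (((r : ℝ) + 1) / Q) * Q := by gcongr
    _ = (r : ℝ) + 1 := by field_simp

lemma map_floor (Q : ℕ) (hQ : 0 < Q) :
    (volume.restrict (Set.Ico (0 : ℝ) 1)).map (fun x => ⌊x * (Q : ℝ)⌋₊)
      = ((Q : ℝ≥0∞))⁻¹ • ∑ r ∈ Finset.range Q, Measure.dirac r := by
  classical
  have hQR : (0 : ℝ) < Q := by exact_mod_cast hQ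
  have hmeas : Measurable fun x : ℝ => ⌊x * (Q : ℝ)⌋₊ :=
    Nat.measurable_floor.comp (measurable_id.mul_const _)
  ext s hs
  rw [Measure.map_apply hmeas hs, Measure.restrict_apply (hmeas hs)]
  have hset : (fun x : ℝ => ⌊x * (Q : ℝ)⌋₊) ⁻¹' s ∩ Set.Ico 0 1
      = ⋃ r ∈ (Finset.range Q).filter (· ∈ s), Set.Ico ((r : ℝ) / Q) (((r : ℝ) + 1) / Q) := by
    ext x
    simp only [Set.mem_inter_iff, Set.mem_preimage, Set.mem_Ico, Set.mem_iUnion,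
      Finset.mem_filter, Finset.mem_range, exists_prop]
    constructor
    · rintro ⟨hxs, hx0, hx1⟩
      refine ⟨⌊x * (Q : ℝ)⌋₊, ⟨(Nat.floor_lt (by positivity)).2 (by nlinarith), hxs⟩, ?_, ?_⟩
      · rw [div_le_iff₀ hQR]
        exact Nat.floor_le (by positivity)
      · rw [lt_div_iff₀ hQR]
        exact Nat.lt_floor_add_one (x * Q)
    · rintro ⟨r, ⟨hrQ, hrs⟩, hxl, hxr⟩
      have hfl := floor_mem_Ico hQ hxl hxr
      refine ⟨by rw [hfl]; exact hrs, le_trans (by positivity) hxl, ?_⟩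
      calc x < ((r : ℝ) + 1) / Q := hxr
      _ ≤ 1 := by
          rw [div_le_one hQR]
          have : (r : ℝ) + 1 ≤ Q := by exact_mod_cast hrQ
          exact this
  have hdisj : (↑((Finset.range Q).filter (· ∈ s)) : Set ℕ).PairwiseDisjoint
      fun r : ℕ => Set.Ico ((r : ℝ) / Q) (((r : ℝ) + 1) / Q) := by
    intro i _ j _ hij
    refine Set.disjoint_left.2 fun x hxi hxj => ?_
    have h1 := floor_mem_Ico hQ hxi.1 hxi.2
    have h2 := floor_mem_Ico hQ hxj.1 hxj.2
    exact hij (h1 ▸ h2 ▸ rfl)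
  rw [hset, measure_biUnion_finset hdisj fun r _ => measurableSet_Ico]
  have hone : ∀ r : ℕ, volume (Set.Ico ((r : ℝ) / Q) (((r : ℝ) + 1) / Q)) = ((Q : ℝ≥0∞))⁻¹ := by
    intro r
    rw [Real.volume_Ico]
    have : ((r : ℝ) + 1) / Q - (r : ℝ) / Q = ((Q : ℝ))⁻¹ := by field_simp; ring
    rw [this, ← ENNReal.ofReal_natCast, ← ENNReal.ofReal_inv_of_pos hQR]
  simp_rw [hone]
  rw [Finset.sum_const, Measure.smul_apply, Measure.coe_finset_sum, Finset.sum_apply]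
  have hdsum : ∑ r ∈ Finset.range Q, Measure.dirac r s
      = ((Finset.range Q).filter (· ∈ s)).card := by
    have : ∀ r : ℕ, (Measure.dirac r s : ℝ≥0∞) = if r ∈ s then 1 else 0 := by
      intro r
      rw [Measure.dirac_apply' _ hs, Set.indicator_apply]
      simp
    simp_rw [this]
    rw [Finset.sum_boole]
  rw [hdsum, smul_eq_mul, nsmul_eq_mul, mul_comm]

/-- Proposition 2.3: if `|b k| ≥ 2`, `N k ≥ 2`, `t k` are nonzero integers,
`D k = {0,…,N k − 1} t k` and `∑ |N_k t_k / (b 0 ⋯ b k)| < ∞`, then the finite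
convolutions `μ_m = δ_{b_0⁻¹D_0} ∗ ⋯ ∗ δ_{(b_0⋯b_m)⁻¹D_m}` converge weakly to a
Borel probability measure on `ℝ`. -/
theorem stmt6 (b t : ℕ → ℤ) (Nk : ℕ → ℕ)
    (hb : ∀ k, 2 ≤ |b k|) (hN : ∀ k, 2 ≤ Nk k) (ht : ∀ k, 1 ≤ |t k|)
    (h : Summable fun k =>
      |((Nk k : ℝ) * (t k : ℝ)) / ∏ i ∈ Finset.range (k + 1), (b i : ℝ)|) :
    ∃ μ : Measure ℝ, IsProbabilityMeasure μ ∧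
      ∀ f : BoundedContinuousFunction ℝ ℝ,
        Tendsto (fun m => ∫ x, f x ∂ (finConv (fun k =>
            unif ((Finset.range (Nk k)).image fun j : ℕ =>
              ((j : ℝ) * (t k : ℝ)) / ∏ i ∈ Finset.range (k + 1), (b i : ℝ))) m))
          atTop (𝓝 (∫ x, f x ∂ μ)) := by
  classical
  have h' : Summable fun k => |((Nk k : ℝ) * (t k : ℝ)) / Pr b k| := h
  have hterm_meas : ∀ k, Measurable (term b t Nk k) := by
    intro k
    have hfl : Measurable fun x : ℝ => ⌊x * (Qn Nk k : ℝ)⌋₊ :=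
      Nat.measurable_floor.comp (measurable_id.mul_const _)
    have : term b t Nk k
        = (fun n : ℕ => xk b t k (n % Nk k)) ∘ fun x : ℝ => ⌊x * (Qn Nk k : ℝ)⌋₊ := rfl
    rw [this]
    exact Measurable.of_discrete.comp hfl
  have hGm_meas : ∀ m, Measurable fun x => ∑ k ∈ Finset.range (m + 1), term b t Nk k x :=
    fun m => Finset.measurable_sum _ fun k _ => hterm_meas k
  have hbound : ∀ k (j : ℕ), j ≤ Nk k →
      |xk b t k j| ≤ |((Nk k : ℝ) * (t k : ℝ)) / Pr b k| := by
    intro k j hj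
    have hPpos : 0 < |Pr b k| := abs_pos.2 (Pr_ne_zero hb k)
    unfold xk
    rw [abs_div, abs_div, abs_mul, abs_mul, Nat.abs_cast]
    rw [div_le_div_iff₀ hPpos hPpos, Nat.abs_cast]
    have hjN : (j : ℝ) ≤ (Nk k : ℝ) := by exact_mod_cast hj
    gcongr
  have hsumm : ∀ x : ℝ, Summable fun k => term b t Nk k x := by
    intro x
    refine Summable.of_norm_bounded h' fun k => ?_
    rw [Real.norm_eq_abs]
    exact hbound k _ (le_of_lt (Nat.mod_lt _ (by have := hN k; omega)))
  set g : ℝ → ℝ := fun x => ∑' k, term b t Nk k x with hgdef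
  have htendsto : ∀ x : ℝ,
      Tendsto (fun m => ∑ k ∈ Finset.range (m + 1), term b t Nk k x) atTop (𝓝 (g x)) := by
    intro x
    exact ((hsumm x).hasSum.tendsto_sum_nat).comp (tendsto_add_atTop_nat 1)
  have hg_meas : Measurable g :=
    measurable_of_tendsto_metrizable
      (fun m => hGm_meas m) (tendsto_pi_nhds.2 htendsto)
  set μ01 : Measure ℝ := volume.restrict (Set.Ico (0 : ℝ) 1) with hμ01def
  have hμ01 : IsProbabilityMeasure μ01 := by
    constructor
    rw [hμ01def, Measure.restrict_apply MeasurableSet.univ, Set.univ_inter, Real.volume_Ico]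
    norm_num
  have key : ∀ m, finConv (fun k =>
        unif ((Finset.range (Nk k)).image fun j : ℕ =>
          ((j : ℝ) * (t k : ℝ)) / ∏ i ∈ Finset.range (k + 1), (b i : ℝ))) m
      = μ01.map (fun x => ∑ k ∈ Finset.range (m + 1), term b t Nk k x) := by
    intro m
    rw [finConv_eq hb hN ht m]
    have hGm : (fun x => ∑ k ∈ Finset.range (m + 1), term b t Nk k x)
        = (fun n : ℕ => sval b t Nk m n) ∘ fun x : ℝ => ⌊x * (Qn Nk m : ℝ)⌋₊ :=
      funext fun x => G_eq hN m x
    rw [hGm, ← Measure.map_map Measurable.of_discrete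
      (show Measurable fun x : ℝ => ⌊x * (Qn Nk m : ℝ)⌋₊ from
        Nat.measurable_floor.comp (measurable_id.mul_const _)),
      map_floor _ (Qn_pos hN m), Measure.map_smul,
      map_finsetSum _ _ Measurable.of_discrete]
    congr 1
    exact (Finset.sum_congr rfl fun r _ => (Measure.map_dirac' Measurable.of_discrete r)).symm
  refine ⟨μ01.map g, Measure.isProbabilityMeasure_map hg_meas.aemeasurable, fun f => ?_⟩
  have hint : (fun m => ∫ x, f x ∂ (finConv (fun k =>
        unif ((Finset.range (Nk k)).image fun j : ℕ =>
          ((j : ℝ) * (t k : ℝ)) / ∏ i ∈ Finset.range (k + 1), (b i : ℝ))) m))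
      = fun m => ∫ x, f (∑ k ∈ Finset.range (m + 1), term b t Nk k x) ∂ μ01 := by
    funext m
    rw [key m, integral_map (hGm_meas m).aemeasurable f.continuous.aestronglyMeasurable]
  rw [hint, integral_map hg_meas.aemeasurable f.continuous.aestronglyMeasurable]
  exact tendsto_integral_of_dominated_convergence (fun _ => ‖f‖)
    (fun m => f.continuous.comp_aestronglyMeasurable (hGm_meas m).aestronglyMeasurable)
    (integrable_const _)
    (fun m => ae_of_all _ fun x => f.norm_coe_le_norm _)
    (ae_of_all _ fun x => (f.continuous.tendsto (g x)).comp (htendsto x))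

end Main
end

section
/- Let {b_k} be integers with b_k ≥ 2 and D_k = {0,1,...,N_k−1} t_k with N_k ≥ 2, t_k ≥ 1. If the convolutions μ_m = δ_{b_1^{-1}D_1} ∗ ⋯ ∗ δ_{(b_1⋯b_m)^{-1}D_m} converge weakly to a Borel probability measure, then Σ_{k=1}^∞ N_k t_k / (b_1 b_2 ⋯ b_k) < ∞. -/
open MeasureTheory Filter
open scoped ENNReal Topology

noncomputable def gfun : ℝ → ℝ := fun x => Real.exp (-(max x 0))

lemma gfun_cont : Continuous gfun :=
  Real.continuous_exp.comp ((continuous_id.max continuous_const).neg)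

lemma gfun_pos (x : ℝ) : 0 < gfun x := Real.exp_pos _
lemma gfun_le_one (x : ℝ) : gfun x ≤ 1 := by
  rw [gfun, show (1:ℝ) = Real.exp 0 by simp]
  exact Real.exp_le_exp.mpr (by simp [le_max_right])

lemma gfun_mul {x y : ℝ} (hx : 0 ≤ x) (hy : 0 ≤ y) : gfun (x + y) = gfun x * gfun y := by
  simp only [gfun, max_eq_left hx, max_eq_left hy,
    max_eq_left (add_nonneg hx hy), neg_add, Real.exp_add]

lemma integrable_dirac'' {f : ℝ → ℝ} (hf : Measurable f) (a : ℝ) :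
    Integrable f (Measure.dirac a) := by
  refine ⟨hf.aestronglyMeasurable, ?_⟩
  rw [HasFiniteIntegral, lintegral_dirac' a (by fun_prop)]
  exact ENNReal.coe_lt_top

lemma integral_unif (E : Finset ℝ) (f : ℝ → ℝ) (hf : Measurable f) :
    ∫ x, f x ∂(unif E) = (E.card : ℝ)⁻¹ * ∑ e ∈ E, f e := by
  rw [unif, integral_smul_measure, integral_finset_sum_measure]
  · simp [integral_dirac' _ _ hf.stronglyMeasurable, smul_eq_mul]
  · intro e _
    exact integrable_dirac'' hf e

lemma unif_prob (E : Finset ℝ) (hE : E.Nonempty) : IsProbabilityMeasure (unif E) := by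
  constructor
  rw [unif, Measure.smul_apply, Measure.finset_sum_apply]
  simp only [Measure.dirac_apply_of_mem (Set.mem_univ _), Finset.sum_const, smul_eq_mul, mul_one]
  rw [nsmul_eq_mul, mul_one]
  exact ENNReal.inv_mul_cancel (Nat.cast_ne_zero.mpr (Finset.card_ne_zero.mpr hE))
    (ENNReal.natCast_ne_top _)

lemma unif_ae_nonneg (E : Finset ℝ) (hE : ∀ e ∈ E, 0 ≤ e) : ∀ᵐ x ∂(unif E), 0 ≤ x := by
  rw [ae_iff]
  rw [unif, Measure.smul_apply, Measure.finset_sum_apply]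
  have : ∀ e ∈ E, Measure.dirac e {x : ℝ | ¬ 0 ≤ x} = 0 := by
    intro e he
    have hms : MeasurableSet {x : ℝ | ¬ 0 ≤ x} :=
      (measurableSet_le measurable_const measurable_id).compl
    rw [Measure.dirac_apply' _ hms]
    simp [Set.indicator_apply, hE e he]
  rw [Finset.sum_congr rfl this]
  simp


lemma mconv_prob (μ ν : Measure ℝ) [IsProbabilityMeasure μ] [IsProbabilityMeasure ν] :
    IsProbabilityMeasure (mconv μ ν) := by
  rw [mconv]
  exact Measure.isProbabilityMeasure_map (measurable_fst.add measurable_snd).aemeasurable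

lemma prod_ae_nonneg {μ ν : Measure ℝ} [IsProbabilityMeasure μ] [IsProbabilityMeasure ν]
    (hμ : ∀ᵐ x ∂μ, 0 ≤ x) (hν : ∀ᵐ x ∂ν, 0 ≤ x) :
    ∀ᵐ p ∂(μ.prod ν), 0 ≤ p.1 ∧ 0 ≤ p.2 := by
  have h1 : ∀ᵐ p ∂(μ.prod ν), 0 ≤ p.1 := by
    rw [ae_iff] at hμ ⊢
    have : {p : ℝ × ℝ | ¬ 0 ≤ p.1} = {x : ℝ | ¬ 0 ≤ x} ×ˢ Set.univ := by
      ext p; simp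
    rw [this, Measure.prod_prod, hμ, zero_mul]
  have h2 : ∀ᵐ p ∂(μ.prod ν), 0 ≤ p.2 := by
    rw [ae_iff] at hν ⊢
    have : {p : ℝ × ℝ | ¬ 0 ≤ p.2} = Set.univ ×ˢ {x : ℝ | ¬ 0 ≤ x} := by
      ext p; simp
    rw [this, Measure.prod_prod, hν, mul_zero]
  exact h1.and h2

lemma mconv_ae_nonneg {μ ν : Measure ℝ} [IsProbabilityMeasure μ] [IsProbabilityMeasure ν]
    (hμ : ∀ᵐ x ∂μ, 0 ≤ x) (hν : ∀ᵐ x ∂ν, 0 ≤ x) :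
    ∀ᵐ x ∂(mconv μ ν), 0 ≤ x := by
  rw [mconv, ae_map_iff (by fun_prop : Measurable fun p : ℝ × ℝ => p.1 + p.2).aemeasurable
    (measurableSet_le measurable_const measurable_id : MeasurableSet {x : ℝ | 0 ≤ x})]
  filter_upwards [prod_ae_nonneg hμ hν] with p hp
  exact add_nonneg hp.1 hp.2

lemma integral_gfun_mconv {μ ν : Measure ℝ} [IsProbabilityMeasure μ] [IsProbabilityMeasure ν]
    (hμ : ∀ᵐ x ∂μ, 0 ≤ x) (hν : ∀ᵐ x ∂ν, 0 ≤ x) :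
    ∫ x, gfun x ∂(mconv μ ν) = (∫ x, gfun x ∂μ) * ∫ x, gfun x ∂ν := by
  rw [mconv, integral_map (by fun_prop : Measurable fun p : ℝ × ℝ => p.1 + p.2).aemeasurable
    gfun_cont.aestronglyMeasurable]
  have : ∫ p, gfun (p.1 + p.2) ∂(μ.prod ν) = ∫ p : ℝ × ℝ, gfun p.1 * gfun p.2 ∂(μ.prod ν) := by
    refine integral_congr_ae ?_
    filter_upwards [prod_ae_nonneg hμ hν] with p hp
    exact gfun_mul hp.1 hp.2
  rw [this, integral_prod_mul]



lemma finConv_facts (ν : ℕ → Measure ℝ) (hp : ∀ k, IsProbabilityMeasure (ν k))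
    (hn : ∀ k, ∀ᵐ x ∂(ν k), 0 ≤ x) (m : ℕ) :
    IsProbabilityMeasure (finConv ν m) ∧ (∀ᵐ x ∂(finConv ν m), 0 ≤ x) ∧
      ∫ x, gfun x ∂(finConv ν m) = ∏ k ∈ Finset.range (m + 1), ∫ x, gfun x ∂(ν k) := by
  induction m with
  | zero => exact ⟨hp 0, hn 0, by simp [finConv]⟩
  | succ m ih =>
    obtain ⟨ih1, ih2, ih3⟩ := ih
    haveI := ih1; haveI := hp (m + 1)
    refine ⟨mconv_prob _ _, mconv_ae_nonneg ih2 (hn (m+1)), ?_⟩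
    show ∫ x, gfun x ∂(mconv (finConv ν m) (ν (m+1))) = _
    rw [integral_gfun_mconv ih2 (hn (m+1)), ih3, ← Finset.prod_range_succ]


lemma half_le_one_sub_exp {x : ℝ} (hx : 0 ≤ x) (hx1 : x ≤ 1) :
    x / 2 ≤ 1 - Real.exp (-x) := by
  have h1 : Real.exp (-x) ≤ (1 + x)⁻¹ := by
    rw [Real.exp_neg]
    exact inv_anti₀ (by linarith) (by linarith [Real.add_one_le_exp x])
  have h2 : (1 + x)⁻¹ ≤ 1 - x / 2 := by
    rw [inv_le_iff_one_le_mul₀ (by linarith)]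
    nlinarith
  linarith

lemma one_sub_avg (N : ℕ) (hN : 0 < N) (g : ℕ → ℝ) :
    1 - (N : ℝ)⁻¹ * ∑ j ∈ Finset.range N, g j
      = (N : ℝ)⁻¹ * ∑ j ∈ Finset.range N, (1 - g j) := by
  have hN' : (N : ℝ) ≠ 0 := Nat.cast_ne_zero.mpr hN.ne'
  rw [Finset.sum_sub_distrib, Finset.sum_const, Finset.card_range]
  field_simp
  simp

lemma claimA {N : ℕ} (hN : 2 ≤ N) {θ : ℝ} (hθ : 0 < θ) (ha : (N : ℝ) * θ ≤ 1) :
    (N : ℝ) * θ ≤ 8 * (1 - (N : ℝ)⁻¹ * ∑ j ∈ Finset.range N, Real.exp (-((j : ℝ) * θ))) := by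
  have hNpos : (0 : ℝ) < N := by positivity
  rw [one_sub_avg N (by omega) _]
  have hterm : ∀ j ∈ Finset.range N, (j : ℝ) * θ / 2 ≤ 1 - Real.exp (-((j : ℝ) * θ)) := by
    intro j hj
    refine half_le_one_sub_exp (by positivity) ?_
    have : (j : ℝ) ≤ N := by
      exact_mod_cast (Finset.mem_range.mp hj).le
    nlinarith
  have hsum : ∑ j ∈ Finset.range N, (j : ℝ) * θ / 2
      ≤ ∑ j ∈ Finset.range N, (1 - Real.exp (-((j : ℝ) * θ))) :=
    Finset.sum_le_sum hterm
  have hgauss : (∑ j ∈ Finset.range N, (j : ℝ)) = (N : ℝ) * ((N : ℝ) - 1) / 2 := by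
    have := Finset.sum_range_id_mul_two N
    have h2 : ((∑ j ∈ Finset.range N, j : ℕ) : ℝ) * 2 = (N : ℝ) * ((N : ℝ) - 1) := by
      rw [← Nat.cast_ofNat, ← Nat.cast_mul, this]
      push_cast [Nat.cast_sub (by omega : 1 ≤ N)]
      ring
    push_cast at h2 ⊢
    linarith
  have hsum2 : (∑ j ∈ Finset.range N, (j : ℝ) * θ / 2) = (N : ℝ) * ((N : ℝ) - 1) / 2 * θ / 2 := by
    have : (∑ j ∈ Finset.range N, (j : ℝ) * θ / 2) = (∑ j ∈ Finset.range N, (j:ℝ)) * (θ / 2) := by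
      rw [Finset.sum_mul]
      exact Finset.sum_congr rfl fun j _ => by ring
    rw [this, hgauss]; ring
  have hNhalf : (N : ℝ) - 1 ≥ (N : ℝ) / 2 := by
    have : (2 : ℝ) ≤ N := by exact_mod_cast hN
    linarith
  have key : (N : ℝ) * θ / 8 ≤ (N:ℝ)⁻¹ * ∑ j ∈ Finset.range N, (1 - Real.exp (-((j : ℝ) * θ))) := by
    rw [ge_iff_le, ← sub_nonneg] at hNhalf
    have h3 : (N : ℝ) * ((N:ℝ)/2) / 2 * θ / 2 ≤ ∑ j ∈ Finset.range N, (1 - Real.exp (-((j : ℝ) * θ))) := by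
      calc (N : ℝ) * ((N:ℝ)/2) / 2 * θ / 2 ≤ (N : ℝ) * ((N : ℝ) - 1) / 2 * θ / 2 := by nlinarith [mul_nonneg (mul_nonneg hNpos.le hNhalf) hθ.le]
      _ ≤ _ := by rw [← hsum2]; exact hsum
    rw [le_inv_mul_iff₀ hNpos]
    calc (N:ℝ) * ((N:ℝ) * θ / 8) = (N : ℝ) * ((N:ℝ)/2) / 2 * θ / 2 := by ring
    _ ≤ _ := h3
  linarith

lemma claimB {N : ℕ} (hN : 2 ≤ N) {θ : ℝ} (hθ : 0 < θ) (ha : 1 ≤ (N : ℝ) * θ) :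
    (1 - Real.exp (-2⁻¹)) / 3
      ≤ 1 - (N : ℝ)⁻¹ * ∑ j ∈ Finset.range N, Real.exp (-((j : ℝ) * θ)) := by
  have hNpos : (0 : ℝ) < N := by positivity
  rw [one_sub_avg N (by omega) _]
  set c : ℕ := (N + 1) / 2 with hc
  have hconst : ∀ j ∈ Finset.Ico c N, 1 - Real.exp (-(2:ℝ)⁻¹) ≤ 1 - Real.exp (-((j : ℝ) * θ)) := by
    intro j hj
    have hjc : c ≤ j := (Finset.mem_Ico.mp hj).1
    have h2j : (N : ℝ) ≤ 2 * j := by exact_mod_cast (by omega : N ≤ 2 * j)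
    have : (2 : ℝ)⁻¹ ≤ (j : ℝ) * θ := by
      have : 1 ≤ 2 * ((j:ℝ) * θ) := le_trans ha (by nlinarith)
      linarith
    have := Real.exp_le_exp.mpr (neg_le_neg this)
    linarith
  have hcard : (Finset.Ico c N).card = N - c := Nat.card_Ico c N
  have hlower : ((N - c : ℕ) : ℝ) * (1 - Real.exp (-(2:ℝ)⁻¹))
      ≤ ∑ j ∈ Finset.Ico c N, (1 - Real.exp (-((j : ℝ) * θ))) := by
    have := Finset.card_nsmul_le_sum (Finset.Ico c N) _ _ hconst
    rwa [hcard, nsmul_eq_mul] at this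
  have hsubset : ∑ j ∈ Finset.Ico c N, (1 - Real.exp (-((j : ℝ) * θ)))
      ≤ ∑ j ∈ Finset.range N, (1 - Real.exp (-((j : ℝ) * θ))) := by
    refine Finset.sum_le_sum_of_subset_of_nonneg ?_ ?_
    · intro j hj; simp only [Finset.mem_Ico, Finset.mem_range] at *; omega
    · intro j _ _
      have : Real.exp (-((j : ℝ) * θ)) ≤ 1 := by
        rw [show (1:ℝ) = Real.exp 0 by simp]
        exact Real.exp_le_exp.mpr (neg_nonpos.mpr (by positivity))
      linarith
  have hexp : (0:ℝ) < 1 - Real.exp (-(2:ℝ)⁻¹) := by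
    have : Real.exp (-(2:ℝ)⁻¹) < 1 := Real.exp_lt_one_iff.mpr (by norm_num)
    linarith
  have hcount : (N : ℝ) / 3 ≤ ((N - c : ℕ) : ℝ) := by
    have : N ≤ 3 * (N - c) := by omega
    have := (Nat.cast_le (α := ℝ)).mpr this
    push_cast at this
    linarith
  rw [le_inv_mul_iff₀ hNpos]
  calc (N:ℝ) * ((1 - Real.exp (-2⁻¹)) / 3) = (N:ℝ)/3 * (1 - Real.exp (-(2:ℝ)⁻¹)) := by ring
  _ ≤ ((N - c : ℕ) : ℝ) * (1 - Real.exp (-(2:ℝ)⁻¹)) := by nlinarith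
  _ ≤ _ := le_trans hlower hsubset

lemma summable_one_sub {I : ℕ → ℝ} (hpos : ∀ k, 0 < I k) (hle : ∀ k, I k ≤ 1) {L : ℝ}
    (hL : 0 < L)
    (hT : Tendsto (fun m => ∏ k ∈ Finset.range (m + 1), I k) atTop (𝓝 L)) :
    Summable (fun k => 1 - I k) := by
  set f : ℕ → ℝ := fun k => - Real.log (I k) with hf
  have hf0 : ∀ k, 0 ≤ f k := fun k =>
    neg_nonneg.mpr (Real.log_nonpos (hpos k).le (hle k))
  have hlog : Tendsto (fun m => ∑ k ∈ Finset.range (m + 1), f k) atTop (𝓝 (- Real.log L)) := by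
    have h1 := ((Real.continuousAt_log hL.ne').tendsto.comp hT).neg
    have h2 : ∀ m, - Real.log (∏ k ∈ Finset.range (m + 1), I k)
        = ∑ k ∈ Finset.range (m + 1), f k := by
      intro m
      rw [Real.log_prod (fun k _ => (hpos k).ne'), ← Finset.sum_neg_distrib]
    simpa [Function.comp, h2] using h1
  have hT2 : Tendsto (fun n => ∑ k ∈ Finset.range n, f k) atTop (𝓝 (- Real.log L)) :=
    (tendsto_add_atTop_iff_nat 1).mp hlog
  have hmono : Monotone (fun n => ∑ k ∈ Finset.range n, f k) :=
    monotone_nat_of_le_succ fun n => by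
      rw [Finset.sum_range_succ]; linarith [hf0 n]
  have hbdd : ∀ n, ∑ k ∈ Finset.range n, f k ≤ - Real.log L :=
    fun n => hmono.ge_of_tendsto hT2 n
  have hsum : Summable f := summable_of_sum_range_le hf0 hbdd
  refine Summable.of_nonneg_of_le (fun k => by linarith [hle k]) (fun k => ?_) hsum
  have := Real.log_le_sub_one_of_pos (hpos k)
  simp only [hf]
  linarith

noncomputable def gbcf : BoundedContinuousFunction ℝ ℝ :=
  BoundedContinuousFunction.ofNormedAddCommGroup gfun gfun_cont 1 (fun x => by
    rw [Real.norm_eq_abs, abs_of_pos (gfun_pos x)]; exact gfun_le_one x)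

lemma gbcf_apply (x : ℝ) : gbcf x = gfun x := rfl


/-- Proposition 2.4: if `b k ≥ 2`, `N k ≥ 2`, `t k ≥ 1`, `D k = {0,…,N k − 1} t k`,
and the finite convolutions `μ_m = δ_{b_0⁻¹D_0} ∗ ⋯ ∗ δ_{(b_0⋯b_m)⁻¹D_m}`
converge weakly to a Borel probability measure, then
`∑ N_k t_k / (b 0 ⋯ b k) < ∞`. -/
theorem stmt7 (b t : ℕ → ℕ) (Nk : ℕ → ℕ)
    (hb : ∀ k, 2 ≤ b k) (hN : ∀ k, 2 ≤ Nk k) (ht : ∀ k, 1 ≤ t k)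
    (h : ∃ μ : Measure ℝ, IsProbabilityMeasure μ ∧
      ∀ f : BoundedContinuousFunction ℝ ℝ,
        Tendsto (fun m => ∫ x, f x ∂ (finConv (fun k =>
            unif ((Finset.range (Nk k)).image fun j : ℕ =>
              ((j : ℝ) * (t k : ℝ)) / ∏ i ∈ Finset.range (k + 1), (b i : ℝ))) m))
          atTop (𝓝 (∫ x, f x ∂ μ))) :
    Summable fun k =>
      ((Nk k : ℝ) * (t k : ℝ)) / ∏ i ∈ Finset.range (k + 1), (b i : ℝ) := by
  obtain ⟨μ, hμprob, hμ⟩ := h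
  set B : ℕ → ℝ := fun k => ∏ i ∈ Finset.range (k + 1), (b i : ℝ) with hB
  have hBpos : ∀ k, 0 < B k := fun k =>
    Finset.prod_pos fun i _ => by exact_mod_cast (by have := hb i; omega : 0 < b i)
  set θ : ℕ → ℝ := fun k => (t k : ℝ) / B k with hθdef
  have hθpos : ∀ k, 0 < θ k := fun k => by
    have h1 : (0:ℝ) < t k := by exact_mod_cast ht k
    exact div_pos h1 (hBpos k)
  set E : ℕ → Finset ℝ := fun k =>
    (Finset.range (Nk k)).image fun j : ℕ => ((j : ℝ) * (t k : ℝ)) / B k with hE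
  set ν : ℕ → Measure ℝ := fun k => unif (E k) with hν
  -- basic facts about E
  have hinj : ∀ k, Function.Injective fun j : ℕ => ((j : ℝ) * (t k : ℝ)) / B k := by
    intro k
    have : StrictMono fun j : ℕ => ((j : ℝ) * (t k : ℝ)) / B k := by
      intro i j hij
      have : (i : ℝ) < j := by exact_mod_cast hij
      have h1 : (0:ℝ) < t k := by exact_mod_cast ht k
      rw [div_lt_div_iff₀ (hBpos k) (hBpos k)]
      nlinarith [mul_pos (mul_pos (sub_pos.mpr this) h1) (hBpos k)]
    exact this.injective
  have hEnonneg : ∀ k, ∀ e ∈ E k, 0 ≤ e := by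
    intro k e he
    simp only [hE, Finset.mem_image] at he
    obtain ⟨j, _, rfl⟩ := he
    exact div_nonneg (by positivity) (hBpos k).le
  have hνprob : ∀ k, IsProbabilityMeasure (ν k) := by
    intro k
    refine unif_prob _ ?_
    exact Finset.Nonempty.image ⟨0, Finset.mem_range.mpr (by have := hN k; omega)⟩ _
  have hνnonneg : ∀ k, ∀ᵐ x ∂(ν k), 0 ≤ x := fun k => unif_ae_nonneg _ (hEnonneg k)
  -- the integrals I k
  set I : ℕ → ℝ := fun k => ∫ x, gfun x ∂(ν k) with hI
  have hIeq : ∀ k, I k = (Nk k : ℝ)⁻¹ *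
      ∑ j ∈ Finset.range (Nk k), Real.exp (-((j : ℝ) * θ k)) := by
    intro k
    simp only [hI, hν, hE]
    rw [integral_unif _ _ gfun_cont.measurable,
      Finset.card_image_of_injective _ (hinj k), Finset.card_range,
      Finset.sum_image (fun x _ y _ e => hinj k e)]
    congr 1
    refine Finset.sum_congr rfl fun j _ => ?_
    have h1 : ((j : ℝ) * (t k : ℝ)) / B k = (j : ℝ) * θ k := by
      rw [hθdef, mul_div_assoc]
    have h2 : (0:ℝ) ≤ (j : ℝ) * θ k := mul_nonneg (Nat.cast_nonneg j) (hθpos k).le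
    rw [h1, gfun, max_eq_left h2]
  have hIpos : ∀ k, 0 < I k := by
    intro k
    rw [hIeq k]
    have : (0:ℝ) < Nk k := by have := hN k; positivity
    refine mul_pos (by positivity) (Finset.sum_pos (fun j _ => Real.exp_pos _) ⟨0, Finset.mem_range.mpr (by have := hN k; omega)⟩)
  have hIle : ∀ k, I k ≤ 1 := by
    intro k
    rw [hIeq k]
    have hNpos : (0:ℝ) < Nk k := by have := hN k; positivity
    have : ∑ j ∈ Finset.range (Nk k), Real.exp (-((j : ℝ) * θ k)) ≤ (Nk k : ℝ) := by
      calc ∑ j ∈ Finset.range (Nk k), Real.exp (-((j : ℝ) * θ k))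
          ≤ ∑ j ∈ Finset.range (Nk k), 1 := by
            refine Finset.sum_le_sum fun j _ => ?_
            rw [show (1:ℝ) = Real.exp 0 by simp]
            exact Real.exp_le_exp.mpr (neg_nonpos.mpr (by positivity))
      _ = (Nk k : ℝ) := by simp
    rw [inv_mul_le_iff₀ hNpos, mul_one]
    exact this
  -- limit
  set L : ℝ := ∫ x, gfun x ∂μ with hL
  have hLpos : 0 < L := by
    rw [hL]
    have hInt : Integrable gfun μ := by
      have := gbcf.integrable μ
      exact this
    rw [integral_pos_iff_support_of_nonneg (fun x => (gfun_pos x).le) hInt]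
    have : Function.support gfun = Set.univ := by
      ext x; simp [Function.mem_support, (gfun_pos x).ne']
    rw [this]
    simp
  have hTI : Tendsto (fun m => ∏ k ∈ Finset.range (m + 1), I k) atTop (𝓝 L) := by
    have h1 := hμ gbcf
    have h2 : ∀ m, ∫ x, gbcf x ∂(finConv ν m) = ∏ k ∈ Finset.range (m + 1), I k := by
      intro m
      have := (finConv_facts ν hνprob hνnonneg m).2.2
      simpa [gbcf_apply] using this
    have h3 : ∫ x, gbcf x ∂μ = L := by simp [gbcf_apply, hL]
    rw [h3] at h1
    refine h1.congr fun m => ?_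
    exact h2 m
  have hsum1 : Summable fun k => 1 - I k := summable_one_sub hIpos hIle hLpos hTI
  -- goal rewrite
  have hgoal : (fun k => ((Nk k : ℝ) * (t k : ℝ)) / B k) = fun k => (Nk k : ℝ) * θ k := by
    funext k; rw [hθdef, mul_div_assoc]
  rw [show (fun k => ((Nk k : ℝ) * (t k : ℝ)) / B k)
      = fun k => (Nk k : ℝ) * θ k from hgoal]
  -- tail argument
  set c0 : ℝ := (1 - Real.exp (-2⁻¹)) / 3 with hc0
  have hc0pos : 0 < c0 := by
    have : Real.exp (-(2:ℝ)⁻¹) < 1 := Real.exp_lt_one_iff.mpr (by norm_num)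
    rw [hc0]; linarith
  have htend : Tendsto (fun k => 1 - I k) atTop (𝓝 0) := hsum1.tendsto_atTop_zero
  have hev : ∀ᶠ k in atTop, 1 - I k < c0 :=
    htend.eventually (Filter.Tendsto.eventually_lt_const hc0pos tendsto_id) |>.mono fun k hk => hk
  obtain ⟨K, hK⟩ := eventually_atTop.mp hev
  have hbound : ∀ k ≥ K, (Nk k : ℝ) * θ k ≤ 8 * (1 - I k) := by
    intro k hk
    have hsmall : (Nk k : ℝ) * θ k ≤ 1 := by
      by_contra hcon
      push_neg at hcon
      have := claimB (hN k) (hθpos k) hcon.le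
      rw [← hIeq k] at this
      exact absurd (hK k hk) (not_lt.mpr (by rw [hc0]; linarith))
    have := claimA (hN k) (hθpos k) hsmall
    rwa [← hIeq k] at this
  rw [← summable_nat_add_iff K]
  refine Summable.of_nonneg_of_le
    (fun n => mul_nonneg (Nat.cast_nonneg _) (hθpos _).le) (fun n => hbound (n + K) (by omega))
    ?_
  exact ((summable_nat_add_iff K).mpr (hsum1.mul_left 8))
end

section
/- Let μ = μ₁ ∗ μ₂ be the convolution of two Borel probability measures on ℝ with compact support, neither of which is a Dirac point mass. If Λ ⊂ ℝ is an orthogonal set for μ₁ (i.e., (Λ−Λ)\{0} ⊂ Z(μ̂₁)), then Λ is also an orthogonal set for μ, but Λ cannot be a spectrum of μ. -/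
open MeasureTheory
open scoped Real

/-- The Fourier transform `μ̂(ξ) = ∫ e^{2πiξx} dμ(x)` of a measure on `ℝ`. -/
noncomputable def ft (μ : Measure ℝ) (ξ : ℝ) : ℂ :=
  ∫ x, Complex.exp (2 * π * Complex.I * ξ * x) ∂μ

/-- `Λ` is an orthogonal set of `μ`: the exponentials `e^{2πiλx}`, `λ ∈ Λ`, are
pairwise orthogonal in `L²(μ)`, i.e. `(Λ − Λ) \ {0} ⊆ Z(μ̂)`. -/
def IsOrthSet (μ : Measure ℝ) (Λ : Set ℝ) : Prop :=
  ∀ l ∈ Λ, ∀ l' ∈ Λ, l ≠ l' → ft μ (l - l') = 0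

/-- `Λ` is a spectrum of `μ`: the exponentials are pairwise orthogonal and
complete in `L²(μ)` (any `f ∈ L²(μ)` orthogonal to all of them vanishes
`μ`-a.e.), so that they form an orthogonal basis of `L²(μ)`. -/
def IsSpectrum (μ : Measure ℝ) (Λ : Set ℝ) : Prop :=
  IsOrthSet μ Λ ∧
    ∀ f : ℝ → ℂ, MemLp f 2 μ →
      (∀ l ∈ Λ, ∫ x, f x * Complex.exp (-(2 * π * Complex.I * l * x)) ∂μ = 0) →
      f =ᵐ[μ] 0

/-! ### Auxiliary material -/

open Complex
open scoped ENNReal InnerProductSpace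

noncomputable def eexp (ξ : ℝ) : ℝ → ℂ := fun x => Complex.exp (2 * π * Complex.I * ξ * x)

lemma eexp_norm (ξ x : ℝ) : ‖eexp ξ x‖ = 1 := by
  simp [eexp, Complex.norm_exp]

lemma eexp_continuous (ξ : ℝ) : Continuous (eexp ξ) := by
  apply Complex.continuous_exp.comp
  exact (continuous_const.mul Complex.continuous_ofReal)

lemma eexp_memℒp (μ : Measure ℝ) [IsFiniteMeasure μ] (ξ : ℝ) (p : ℝ≥0∞) :
    MemLp (eexp ξ) p μ := by
  have h := memLp_top_of_bound ((eexp_continuous ξ).aestronglyMeasurable (μ := μ)) 1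
    (Filter.Eventually.of_forall fun x => le_of_eq (eexp_norm ξ x))
  exact h.mono_exponent le_top

lemma eexp_integrable (μ : Measure ℝ) [IsFiniteMeasure μ] (ξ : ℝ) :
    Integrable (eexp ξ) μ :=
  memLp_one_iff_integrable.mp (eexp_memℒp μ ξ 1)

lemma ft_eq (μ : Measure ℝ) (ξ : ℝ) : ft μ ξ = ∫ x, eexp ξ x ∂μ := rfl

lemma ft_zero (μ : Measure ℝ) [IsProbabilityMeasure μ] : ft μ 0 = 1 := by
  simp [ft]

lemma norm_ft_le_one (μ : Measure ℝ) [IsProbabilityMeasure μ] (ξ : ℝ) : ‖ft μ ξ‖ ≤ 1 := by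
  calc ‖ft μ ξ‖ ≤ ∫ x, ‖eexp ξ x‖ ∂μ := norm_integral_le_integral_norm _
  _ = 1 := by simp only [eexp_norm]; simp

lemma eexp_add (ξ x y : ℝ) : eexp ξ (x + y) = eexp ξ x * eexp ξ y := by
  simp only [eexp, ← Complex.exp_add, Complex.ofReal_add]
  ring_nf

instance mconv_prob_s9 (μ ν : Measure ℝ) [IsProbabilityMeasure μ] [IsProbabilityMeasure ν] :
    IsProbabilityMeasure (mconv μ ν) := by
  rw [mconv]
  exact Measure.isProbabilityMeasure_map ((measurable_fst.add measurable_snd).aemeasurable)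

lemma ft_mconv (μ ν : Measure ℝ) [IsProbabilityMeasure μ] [IsProbabilityMeasure ν] (ξ : ℝ) :
    ft (mconv μ ν) ξ = ft μ ξ * ft ν ξ := by
  have hmeas : Measurable fun p : ℝ × ℝ => p.1 + p.2 := measurable_fst.add measurable_snd
  have h1 : ft (mconv μ ν) ξ = ∫ p : ℝ × ℝ, eexp ξ (p.1 + p.2) ∂(μ.prod ν) := by
    rw [ft, mconv, integral_map hmeas.aemeasurable]
    · rfl
    · exact (eexp_continuous ξ).aestronglyMeasurable
  rw [h1]
  have h2 : ∀ p : ℝ × ℝ, eexp ξ (p.1 + p.2) = eexp ξ p.1 * eexp ξ p.2 := fun p => eexp_add _ _ _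
  simp_rw [h2]
  rw [integral_prod_mul (f := fun x => eexp ξ x) (g := fun y => eexp ξ y)]
  rfl

lemma eexp_conj (ξ x : ℝ) :
    (starRingEnd ℂ) (eexp ξ x) = Complex.exp (-(2 * π * Complex.I * ξ * x)) := by
  rw [eexp, ← Complex.exp_conj]
  congr 1
  simp only [map_mul, map_ofNat, Complex.conj_I, Complex.conj_ofReal]
  ring

lemma eexp_mul_eexp (a b x : ℝ) :
    Complex.exp (-(2 * π * Complex.I * a * x)) * eexp b x = eexp (b - a) x := by
  rw [eexp, eexp, ← Complex.exp_add]
  congr 1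
  push_cast
  ring

section L2

variable (μ : Measure ℝ) [IsProbabilityMeasure μ]

noncomputable def expLp (ξ : ℝ) : Lp ℂ 2 μ := (eexp_memℒp μ ξ 2).toLp (eexp ξ)

lemma inner_expLp (a b : ℝ) : ⟪expLp μ a, expLp μ b⟫_ℂ = ft μ (b - a) := by
  rw [MeasureTheory.L2.inner_def]
  have h1 : ⇑(expLp μ a) =ᵐ[μ] eexp a := (eexp_memℒp μ a 2).coeFn_toLp
  have h2 : ⇑(expLp μ b) =ᵐ[μ] eexp b := (eexp_memℒp μ b 2).coeFn_toLp
  have h3 : ∫ x, ⟪(expLp μ a) x, (expLp μ b) x⟫_ℂ ∂μ = ∫ x, ⟪eexp a x, eexp b x⟫_ℂ ∂μ := by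
    apply integral_congr_ae
    filter_upwards [h1, h2] with x hx1 hx2
    rw [hx1, hx2]
  rw [h3, ft]
  apply integral_congr_ae
  filter_upwards with x
  rw [RCLike.inner_apply', eexp_conj, eexp_mul_eexp]
  rfl

lemma inner_expLp_right (f : Lp ℂ 2 μ) (l : ℝ) :
    ⟪expLp μ l, f⟫_ℂ = ∫ x, f x * Complex.exp (-(2 * π * Complex.I * l * x)) ∂μ := by
  rw [MeasureTheory.L2.inner_def]
  apply integral_congr_ae
  have h1 : ⇑(expLp μ l) =ᵐ[μ] eexp l := (eexp_memℒp μ l 2).coeFn_toLp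
  filter_upwards [h1] with x hx
  rw [RCLike.inner_apply']
  rw [hx, eexp_conj, mul_comm]

lemma orthonormal_expLp (Λ : Set ℝ) (hΛ : IsOrthSet μ Λ) :
    Orthonormal ℂ (fun l : Λ => expLp μ l) := by
  rw [orthonormal_iff_ite]
  intro i j
  rw [inner_expLp]
  by_cases h : i = j
  · simp [h, sub_self, ft_zero μ]
  · rw [if_neg h]
    exact hΛ j.1 j.2 i.1 i.2 (fun hji => h (Subtype.ext hji.symm))

/-- Bessel's inequality for the exponentials. -/
lemma bessel_ft (Λ : Set ℝ) (hΛ : IsOrthSet μ Λ) (ξ : ℝ) :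
    Summable (fun l : Λ => ‖ft μ (ξ - l)‖ ^ 2) ∧
    ∑' l : Λ, ‖ft μ (ξ - l)‖ ^ 2 ≤ 1 := by
  have hON := orthonormal_expLp μ Λ hΛ
  have hx : ∀ l : Λ, ⟪expLp μ l, expLp μ ξ⟫_ℂ = ft μ (ξ - l) := fun l => inner_expLp μ l ξ
  have hnorm : ‖expLp μ ξ‖ ^ 2 = 1 := by
    have h := @inner_self_eq_norm_sq ℂ _ _ _ _ (expLp μ ξ)
    rw [inner_expLp, sub_self, ft_zero μ] at h
    simpa using h.symm
  constructor
  · have := hON.inner_products_summable (x := expLp μ ξ)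
    simpa only [hx] using this
  · have := hON.tsum_inner_products_le (x := expLp μ ξ)
    simp only [hx] at this
    rwa [hnorm] at this

/-- Parseval's identity for the exponentials, given completeness. -/
lemma parseval_ft (Λ : Set ℝ) (hΛ : IsOrthSet μ Λ)
    (hcomp : ∀ f : ℝ → ℂ, MemLp f 2 μ →
      (∀ l ∈ Λ, ∫ x, f x * Complex.exp (-(2 * π * Complex.I * l * x)) ∂μ = 0) →
      f =ᵐ[μ] 0) (ξ : ℝ) :
    HasSum (fun l : Λ => ‖ft μ (ξ - l)‖ ^ 2) 1 := by
  have hON := orthonormal_expLp μ Λ hΛ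
  have hbot : (Submodule.span ℂ (Set.range fun l : Λ => expLp μ l))ᗮ = ⊥ := by
    rw [Submodule.eq_bot_iff]
    intro f hf
    have hinner : ∀ l ∈ Λ, ∫ x, f x * Complex.exp (-(2 * π * Complex.I * l * x)) ∂μ = 0 := by
      intro l hl
      rw [← inner_expLp_right]
      exact hf _ (Submodule.subset_span ⟨⟨l, hl⟩, rfl⟩)
    have h0 : (f : ℝ → ℂ) =ᵐ[μ] 0 := hcomp f (Lp.memLp f) hinner
    exact Lp.eq_zero_iff_ae_eq_zero.mpr h0
  let hb : HilbertBasis Λ ℂ (Lp ℂ 2 μ) := HilbertBasis.mkOfOrthogonalEqBot hON hbot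
  have hcoe : ⇑hb = fun l : Λ => expLp μ l := HilbertBasis.coe_mkOfOrthogonalEqBot hON hbot
  have hps := hb.hasSum_inner_mul_inner (expLp μ ξ) (expLp μ ξ)
  rw [hcoe] at hps
  have hterm : ∀ l : Λ, ⟪expLp μ ξ, expLp μ l⟫_ℂ * ⟪expLp μ l, expLp μ ξ⟫_ℂ
      = ((‖ft μ (ξ - l)‖ ^ 2 : ℝ) : ℂ) := by
    intro l
    have h1 : ⟪expLp μ ξ, expLp μ (l : ℝ)⟫_ℂ = (starRingEnd ℂ) (ft μ (ξ - l)) := by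
      rw [← inner_conj_symm, inner_expLp]
    rw [h1, inner_expLp, mul_comm, Complex.mul_conj, Complex.normSq_eq_norm_sq]
  simp only [hterm] at hps
  rw [inner_expLp, sub_self, ft_zero μ] at hps
  have := (Complex.hasSum_iff _ _).mp hps
  simpa [← Complex.ofReal_pow] using this.1

end L2

/-- Nonvanishing of `μ̂` near `0`. -/
lemma ft_ne_zero_near (μ : Measure ℝ) [IsProbabilityMeasure μ] :
    ∃ ε > 0, ∀ t : ℝ, |t| < ε → ft μ t ≠ 0 := by
  have hcont : ContinuousAt (ft μ) 0 := by
    apply continuousAt_of_dominated (bound := fun _ => 1)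
    · exact Filter.Eventually.of_forall fun ξ => (eexp_continuous ξ).aestronglyMeasurable
    · exact Filter.Eventually.of_forall fun ξ =>
        Filter.Eventually.of_forall fun x => le_of_eq (eexp_norm ξ x)
    · exact integrable_const 1
    · refine Filter.Eventually.of_forall fun x => ?_
      apply Continuous.continuousAt
      apply Complex.continuous_exp.comp
      exact (continuous_const.mul Complex.continuous_ofReal).mul continuous_const
  have h1 : ft μ 0 = 1 := ft_zero μ
  have h2 : ∀ᶠ t in nhds (0:ℝ), ‖ft μ t - 1‖ < 1 := by
    have h3 := hcont.tendsto
    rw [h1] at h3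
    have h4 := Metric.tendsto_nhds.mp h3 1 one_pos
    simpa [dist_eq_norm] using h4
  rw [Metric.eventually_nhds_iff] at h2
  obtain ⟨ε, hε, h⟩ := h2
  refine ⟨ε, hε, fun t ht => ?_⟩
  have := h (by simpa [Real.dist_eq] using ht)
  intro h0
  rw [h0] at this
  simp at this

/-- If `|μ̂(t)| = 1` then `e^{2πitx}` is a.e. constant equal to `μ̂(t)`. -/
lemma ae_const_of_norm_ft_eq_one (μ : Measure ℝ) [IsProbabilityMeasure μ] (t : ℝ)
    (h : ‖ft μ t‖ = 1) : ∀ᵐ x ∂μ, eexp t x = ft μ t := by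
  set c := ft μ t with hc
  have hns : c * (starRingEnd ℂ) c = 1 := by
    rw [Complex.mul_conj]
    norm_cast
    rw [Complex.normSq_eq_norm_sq, h]; norm_num
  have hcint : Integrable (fun x => ((starRingEnd ℂ) c * eexp t x).re) μ :=
    (((eexp_integrable μ t).const_mul _).re)
  have hint : Integrable (fun x => 1 - ((starRingEnd ℂ) c * eexp t x).re) μ :=
    (integrable_const 1).sub hcint
  have h' : Integrable (fun x => (starRingEnd ℂ) c * eexp t x) μ :=
    (eexp_integrable μ t).const_mul _
  have h1 : ∫ x, (starRingEnd ℂ) c * eexp t x ∂μ = (starRingEnd ℂ) c * c := by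
    rw [MeasureTheory.integral_const_mul, ← ft_eq]
  have h2 : ∫ x, ((starRingEnd ℂ) c * eexp t x).re ∂μ = ((starRingEnd ℂ) c * c).re := by
    have := integral_re h'
    rw [h1] at this
    simpa [RCLike.re_eq_complex_re] using this
  have hzero : ∫ x, (1 - ((starRingEnd ℂ) c * eexp t x).re) ∂μ = 0 := by
    rw [integral_sub (integrable_const 1) hcint]
    simp only [integral_const, measure_univ, probReal_univ, ENNReal.toReal_one, smul_eq_mul, one_mul]
    rw [h2, mul_comm, hns]
    simp
  have hnonneg : 0 ≤ᵐ[μ] fun x => 1 - ((starRingEnd ℂ) c * eexp t x).re := by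
    refine Filter.Eventually.of_forall fun x => ?_
    have hb : ‖(starRingEnd ℂ) c * eexp t x‖ = 1 := by
      rw [norm_mul, RCLike.norm_conj, h, eexp_norm, one_mul]
    have habs := Complex.abs_re_le_norm ((starRingEnd ℂ) c * eexp t x)
    simp only [Pi.zero_apply, sub_nonneg]
    calc ((starRingEnd ℂ) c * eexp t x).re ≤ |((starRingEnd ℂ) c * eexp t x).re| := le_abs_self _
    _ ≤ 1 := by rw [← hb]; exact habs
  have hae := (integral_eq_zero_iff_of_nonneg_ae hnonneg hint).mp hzero
  filter_upwards [hae] with x hx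
  have hre : ((starRingEnd ℂ) c * eexp t x).re = 1 := by
    have h0 : (1 : ℝ) - ((starRingEnd ℂ) c * eexp t x).re = 0 := hx
    linarith
  have hb : ‖(starRingEnd ℂ) c * eexp t x‖ = 1 := by
    rw [norm_mul, RCLike.norm_conj, h, eexp_norm, one_mul]
  have heq : (starRingEnd ℂ) c * eexp t x = 1 := by
    have him : ((starRingEnd ℂ) c * eexp t x).im = 0 := by
      have h2' : ‖(starRingEnd ℂ) c * eexp t x‖ ^ 2 =
          ((starRingEnd ℂ) c * eexp t x).re ^ 2 + ((starRingEnd ℂ) c * eexp t x).im ^ 2 := by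
        rw [Complex.sq_norm, Complex.normSq_apply]; ring
      rw [hb, hre] at h2'
      nlinarith
    exact Complex.ext (by rw [hre]; rfl) (by rw [him]; rfl)
  calc eexp t x = (c * (starRingEnd ℂ) c) * eexp t x := by rw [hns, one_mul]
  _ = c * ((starRingEnd ℂ) c * eexp t x) := by ring
  _ = c := by rw [heq, mul_one]

lemma dirac_of_singleton (μ : Measure ℝ) [IsProbabilityMeasure μ] (x₀ : ℝ)
    (h : μ {x₀}ᶜ = 0) : μ = Measure.dirac x₀ := by
  ext s hs
  rw [Measure.dirac_apply' _ hs]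
  by_cases hx : x₀ ∈ s
  · have h1 : μ s = 1 := by
      have hle : μ sᶜ ≤ μ {x₀}ᶜ :=
        measure_mono (Set.compl_subset_compl.mpr (Set.singleton_subset_iff.mpr hx))
      have h2 : μ sᶜ = 0 := le_antisymm (hle.trans h.le) (by simp)
      have h3 := measure_add_measure_compl (μ := μ) hs
      rw [h2, add_zero, measure_univ] at h3
      exact h3
    rw [h1, Set.indicator_of_mem hx]; rfl
  · have h1 : μ s = 0 := by
      have hsub : s ⊆ {x₀}ᶜ := fun y hy => by
        simp only [Set.mem_compl_iff, Set.mem_singleton_iff]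
        rintro rfl; exact hx hy
      exact le_antisymm ((measure_mono hsub).trans h.le) (by simp)
    rw [h1, Set.indicator_of_notMem hx]

lemma int_of_eexp_eq (t x y : ℝ) (h : eexp t x = eexp t y) : ∃ n : ℤ, t * (x - y) = n := by
  have h1 : Complex.exp (2 * π * Complex.I * t * x - 2 * π * Complex.I * t * y) = 1 := by
    rw [Complex.exp_sub, eexp, eexp] at *
    rw [h, div_self (Complex.exp_ne_zero _)]
  rw [Complex.exp_eq_one_iff] at h1
  obtain ⟨n, hn⟩ := h1
  refine ⟨n, ?_⟩
  have hπ : (π : ℂ) ≠ 0 := Complex.ofReal_ne_zero.mpr Real.pi_ne_zero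
  have hI : Complex.I ≠ 0 := Complex.I_ne_zero
  have h2 : 2 * (π:ℂ) * Complex.I ≠ 0 := by
    simp [hπ, hI]
  have h3 : (2*(π:ℂ)*Complex.I) * ((t*(x-y):ℝ):ℂ) = (2*(π:ℂ)*Complex.I) * (n:ℂ) := by
    push_cast
    linear_combination hn
  have h4 := mul_left_cancel₀ h2 h3
  exact_mod_cast h4

/-- If `e^{2πitx}` is a.e. constant for all small `t`, the measure is Dirac. -/
lemma dirac_of_ae_const (μ : Measure ℝ) [IsProbabilityMeasure μ] (ε : ℝ) (hε : 0 < ε)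
    (h : ∀ t : ℝ, |t| < ε → ∃ c : ℂ, ∀ᵐ x ∂μ, eexp t x = c) :
    ∃ x₀ : ℝ, μ = Measure.dirac x₀ := by
  set t₁ := ε / 2 with ht₁
  set t₂ := ε / 2 / Real.sqrt 2 with ht₂
  have hs2 : (1:ℝ) < Real.sqrt 2 := by
    nlinarith [Real.sq_sqrt (by norm_num : (2:ℝ) ≥ 0), Real.sqrt_nonneg 2]
  have h1 : |t₁| < ε := by rw [abs_of_pos (by positivity)]; linarith
  have h2 : |t₂| < ε := by
    rw [abs_of_pos (by positivity)]
    rw [ht₂, div_lt_iff₀ (by positivity)]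
    nlinarith
  obtain ⟨c₁, hc₁⟩ := h t₁ h1
  obtain ⟨c₂, hc₂⟩ := h t₂ h2
  have hS : ∀ᵐ x ∂μ, eexp t₁ x = c₁ ∧ eexp t₂ x = c₂ := hc₁.and hc₂
  have hne : ∃ x₀ : ℝ, eexp t₁ x₀ = c₁ ∧ eexp t₂ x₀ = c₂ := by
    by_contra hcon
    push_neg at hcon
    have hfalse : ∀ᵐ x ∂μ, False := by
      filter_upwards [hS] with x hx
      exact hcon x hx.1 hx.2
    have h0 : μ Set.univ = 0 := by simpa [ae_iff] using hfalse
    rw [measure_univ] at h0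
    exact one_ne_zero h0
  obtain ⟨x₀, hx₀1, hx₀2⟩ := hne
  refine ⟨x₀, dirac_of_singleton μ x₀ ?_⟩
  have hsub : ∀ x : ℝ, (eexp t₁ x = c₁ ∧ eexp t₂ x = c₂) → x = x₀ := by
    rintro x ⟨hx1, hx2⟩
    obtain ⟨n, hn⟩ := int_of_eexp_eq t₁ x x₀ (by rw [hx1, hx₀1])
    obtain ⟨m, hm⟩ := int_of_eexp_eq t₂ x x₀ (by rw [hx2, hx₀2])
    by_contra hxx
    have hd : x - x₀ ≠ 0 := sub_ne_zero.mpr hxx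
    have ht₂0 : t₂ ≠ 0 := by positivity
    have hm0 : (m:ℝ) ≠ 0 := by
      rw [← hm]; exact mul_ne_zero ht₂0 hd
    have hs0 : Real.sqrt 2 ≠ 0 := by positivity
    have hsqrt : Real.sqrt 2 = (n:ℝ)/(m:ℝ) := by
      rw [eq_div_iff hm0, ← hn, ← hm, ht₂, ht₁]
      field_simp
    exact irrational_sqrt_two ⟨(n:ℚ)/(m:ℚ), by push_cast; rw [hsqrt]⟩
  have h5 : ∀ᵐ x ∂μ, x = x₀ := by filter_upwards [hS] with x hx using hsub x hx
  rw [ae_iff] at h5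
  convert h5 using 2
  ext; simp

/-- From `HasSum f 1`, `∑ g ≤ 1` and `f ≤ g` pointwise, conclude `f = g`. -/
lemma eq_of_hasSum_le {ι : Type*} (f g : ι → ℝ) (hfg : ∀ i, f i ≤ g i) (hf : HasSum f 1)
    (hg : Summable g) (hg1 : ∑' i, g i ≤ 1) : ∀ i, f i = g i := by
  have hdiff : Summable fun i => g i - f i := hg.sub hf.summable
  have htsum : ∑' i, (g i - f i) = (∑' i, g i) - 1 := by
    rw [Summable.tsum_sub hg hf.summable, hf.tsum_eq]
  intro i
  have hle : g i - f i ≤ ∑' j, (g j - f j) :=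
    Summable.le_tsum hdiff i (fun j _ => sub_nonneg.mpr (hfg j))
  have hle0 : ∑' j, (g j - f j) ≤ 0 := by rw [htsum]; linarith
  have := hle.trans hle0
  linarith [hfg i]

/-- Lemma 3.2: let `μ = μ₁ ∗ μ₂` with `μ₁, μ₂` compactly supported Borel
probability measures, neither a Dirac mass.  If `Λ` is an orthogonal set of
`μ₁`, then `Λ` is an orthogonal set of `μ`, but `Λ` is not a spectrum of `μ`. -/
theorem stmt9 (μ₁ μ₂ : Measure ℝ)
    (h₁ : IsProbabilityMeasure μ₁) (h₂ : IsProbabilityMeasure μ₂)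
    (K₁ K₂ : Set ℝ) (hK₁ : IsCompact K₁) (hK₂ : IsCompact K₂)
    (hμK₁ : μ₁ K₁ᶜ = 0) (hμK₂ : μ₂ K₂ᶜ = 0)
    (hd₁ : ∀ x : ℝ, μ₁ ≠ Measure.dirac x) (hd₂ : ∀ x : ℝ, μ₂ ≠ Measure.dirac x)
    (Λ : Set ℝ) (hΛ : IsOrthSet μ₁ Λ) :
    IsOrthSet (mconv μ₁ μ₂) Λ ∧ ¬ IsSpectrum (mconv μ₁ μ₂) Λ := by
  haveI := h₁; haveI := h₂
  set μ := mconv μ₁ μ₂ with hμ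
  haveI : IsProbabilityMeasure μ := mconv_prob_s9 μ₁ μ₂
  have horthμ : IsOrthSet μ Λ := by
    intro l hl l' hl' hne
    rw [hμ, ft_mconv, hΛ l hl l' hl' hne, zero_mul]
  refine ⟨horthμ, ?_⟩
  rintro ⟨horth, hcomp⟩
  rcases Set.eq_empty_or_nonempty Λ with hΛe | ⟨l₀, hl₀⟩
  · -- empty orthogonal set is never complete
    have h0 := hcomp (fun _ => (1:ℂ)) (memLp_const 1)
      (fun l hl => by rw [hΛe] at hl; exact absurd hl (Set.notMem_empty l))
    have h1 : μ Set.univ = 0 := by simpa [ae_iff, Filter.EventuallyEq] using h0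
    rw [measure_univ] at h1
    exact one_ne_zero h1
  · -- main case
    have key : ∀ t : ℝ, ft μ₁ t ≠ 0 → ‖ft μ₂ t‖ = 1 := by
      intro t hne
      set ξ := l₀ + t with hξ
      have hpar := parseval_ft μ Λ horth hcomp ξ
      have hbes := bessel_ft μ₁ Λ hΛ ξ
      have hfg : ∀ l : Λ, ‖ft μ (ξ - l)‖ ^ 2 ≤ ‖ft μ₁ (ξ - l)‖ ^ 2 := by
        intro l
        rw [hμ, ft_mconv, norm_mul]
        have hb := norm_ft_le_one μ₂ (ξ - l)
        have ha := norm_nonneg (ft μ₁ (ξ - l))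
        have hbn := norm_nonneg (ft μ₂ (ξ - l))
        rw [mul_pow]
        calc ‖ft μ₁ (ξ - (l:ℝ))‖ ^ 2 * ‖ft μ₂ (ξ - (l:ℝ))‖ ^ 2
            ≤ ‖ft μ₁ (ξ - (l:ℝ))‖ ^ 2 * 1 :=
              mul_le_mul_of_nonneg_left (by nlinarith) (sq_nonneg _)
        _ = ‖ft μ₁ (ξ - (l:ℝ))‖ ^ 2 := mul_one _
      have heq := eq_of_hasSum_le _ _ hfg hpar hbes.1 hbes.2 ⟨l₀, hl₀⟩
      have hxl : ξ - (⟨l₀, hl₀⟩ : Λ) = t := by simp [hξ]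
      rw [hxl] at heq
      rw [hμ, ft_mconv, norm_mul] at heq
      have h1 : ‖ft μ₁ t‖ ≠ 0 := norm_ne_zero_iff.mpr hne
      have h1' : 0 < ‖ft μ₁ t‖ := lt_of_le_of_ne (norm_nonneg _) (Ne.symm h1)
      have hb2 : ‖ft μ₂ t‖ ^ 2 = 1 := by
        rw [mul_pow] at heq
        exact mul_left_cancel₀ (pow_ne_zero 2 h1) (heq.trans (mul_one (‖ft μ₁ t‖ ^ 2)).symm)
      have hbn := norm_nonneg (ft μ₂ t)
      nlinarith
    obtain ⟨ε, hε, hnz⟩ := ft_ne_zero_near μ₁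
    have hae : ∀ t : ℝ, |t| < ε → ∃ c : ℂ, ∀ᵐ x ∂μ₂, eexp t x = c := by
      intro t ht
      exact ⟨ft μ₂ t, ae_const_of_norm_ft_eq_one μ₂ t (key t (hnz t ht))⟩
    obtain ⟨x₀, hx₀⟩ := dirac_of_ae_const μ₂ ε hε hae
    exact hd₂ x₀ hx₀
end

section
/- Let D ⊂ ℤ be a finite set and L ⊂ ℤ with D ⊕ L = ℤ and 0 ∈ D ∩ L. If l is an integer with gcd(l, #D) = 1, then lD ⊕ L = ℤ. -/
open scoped Classical

namespace Tij

/-- `lA ⊕ B` tiles `ℤ` (with `A` listed by the coefficient-`l` map). -/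
def Tl (A : Finset ℤ) (B : Set ℤ) (l : ℤ) : Prop :=
  ∀ n : ℤ, ∃! q : ℤ × ℤ, q.1 ∈ A ∧ q.2 ∈ B ∧ n = l * q.1 + q.2

variable {A : Finset ℤ} {B : Set ℤ}

theorem hrep (h : Tl A B 1) (n : ℤ) : ∃! a : ℤ, a ∈ A ∧ n - a ∈ B := by
  obtain ⟨q, ⟨hq1, hq2, hq3⟩, huq⟩ := h n
  refine ⟨q.1, ⟨hq1, by rw [hq3]; simpa using hq2⟩, ?_⟩
  intro a ⟨ha, hb⟩
  have := huq (a, n - a) ⟨ha, hb, by ring⟩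
  rw [← this]

theorem card_res (h : Tl A B 1) (n : ℤ) :
    Fintype.card {a : ↥A // n - (a : ℤ) ∈ B} = 1 := by
  obtain ⟨a, ⟨ha, hb⟩, hu⟩ := hrep h n
  rw [Fintype.card_eq_one_iff]
  refine ⟨⟨⟨a, ha⟩, hb⟩, ?_⟩
  rintro ⟨⟨x, hx⟩, hxb⟩
  exact Subtype.ext (Subtype.ext (hu x ⟨hx, hxb⟩))


noncomputable def Nk (A : Finset ℤ) (B : Set ℤ) (k : ℕ) (n : ℤ) : ℕ :=
  Fintype.card {f : Fin k → ↥A // n - (∑ i, ((f i : ℤ))) ∈ B}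

variable {A : Finset ℤ} {B : Set ℤ}

theorem Nk_one (n : ℤ) :
    Nk A B 1 n = Fintype.card {a : ↥A // n - (a : ℤ) ∈ B} := by
  refine Fintype.card_congr ?_
  refine ⟨fun f => ⟨f.1 0, by simpa using f.2⟩, fun a => ⟨fun _ => a.1, by simpa using a.2⟩,
    ?_, ?_⟩
  · rintro ⟨f, hf⟩
    refine Subtype.ext (funext fun i => ?_)
    simp [Subsingleton.elim i 0]
  · rintro ⟨a, ha⟩; rfl

theorem Nk_succ (k : ℕ) (n : ℤ) :
    Nk A B (k + 1) n = ∑ a : ↥A, Nk A B k (n - (a : ℤ)) := by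
  simp only [Nk]
  rw [← Fintype.card_sigma]
  refine Fintype.card_congr ?_
  refine Equiv.trans ?_ (Equiv.subtypeProdEquivSigmaSubtype
    (fun (a : ↥A) (g : Fin k → ↥A) => (n - (a : ℤ)) - (∑ i, ((g i : ℤ))) ∈ B))
  refine Equiv.subtypeEquiv (Fin.consEquiv (fun _ : Fin (k+1) => ↥A)).symm (fun f => ?_)
  rw [Fin.sum_univ_succ]
  constructor
  · intro hf
    simpa [sub_sub, Fin.tail] using hf
  · intro hf
    simpa [sub_sub, Fin.tail] using hf

theorem Nk_card (h : Tl A B 1) (k : ℕ) (n : ℤ) : Nk A B (k + 1) n = A.card ^ k := by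
  induction k generalizing n with
  | zero => simpa [Nk_one] using card_res h n
  | succ k ih =>
    rw [Nk_succ]
    simp only [ih]
    rw [Finset.sum_const, Finset.card_univ, Fintype.card_coe, smul_eq_mul, pow_succ, mul_comm]

theorem exists_rep (h : Tl A B 1) {p : ℕ} (hp : p.Prime) (hpc : ¬ p ∣ A.card) (n : ℤ) :
    ∃ a ∈ A, n - (p : ℤ) * a ∈ B := by
  haveI : Fact p.Prime := ⟨hp⟩
  -- the set of p-indexed tuples
  set Y := {f : ZMod p → ↥A // n - (∑ i, ((f i : ℤ))) ∈ B} with hY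
  have e : Fin p ≃ ZMod p := Fintype.equivOfCardEq (by simp [ZMod.card])
  have hcardY : Fintype.card Y = Nk A B p n := by
    rw [Nk]
    refine Fintype.card_congr ?_
    refine Equiv.subtypeEquiv (Equiv.arrowCongr e (Equiv.refl ↥A)).symm (fun f => ?_)
    have : (∑ i : Fin p, ((f (e i) : ℤ))) = ∑ i : ZMod p, ((f i : ℤ)) :=
      Equiv.sum_comp e (fun i => ((f i : ℤ)))
    simp [Equiv.arrowCongr, this]
  -- rotation action
  letI : MulAction (Multiplicative (ZMod p)) Y :=
    { smul := fun g f => ⟨fun i => f.1 (i + g.toAdd), by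
        have hs : (∑ i : ZMod p, ((f.1 (i + g.toAdd) : ℤ))) = ∑ i, ((f.1 i : ℤ)) :=
          Fintype.sum_equiv (Equiv.addRight g.toAdd) _ _ (fun i => rfl)
        rw [hs]; exact f.2⟩
      one_smul := fun f => Subtype.ext (funext fun i => by
        show f.1 (i + Multiplicative.toAdd 1) = f.1 i
        simp)
      mul_smul := fun g h f => Subtype.ext (funext fun i => by
        show f.1 (i + Multiplicative.toAdd (g * h))
          = f.1 (i + Multiplicative.toAdd g + Multiplicative.toAdd h)
        rw [toAdd_mul, add_assoc]) }
  have hpg : IsPGroup p (Multiplicative (ZMod p)) :=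
    IsPGroup.of_card (n := 1) (by simp [Nat.card_eq_fintype_card, ZMod.card])
  have hmod := hpg.card_modEq_card_fixedPoints Y
  -- fixed points are the constant tuples
  have hfix : Nat.card (MulAction.fixedPoints (Multiplicative (ZMod p)) Y)
      = Fintype.card {a : ↥A // n - (p : ℤ) * (a : ℤ) ∈ B} := by
    rw [Nat.card_eq_fintype_card]
    refine Fintype.card_congr ?_
    have hconstsum : ∀ a : ↥A, (∑ _i : ZMod p, ((a : ℤ))) = (p : ℤ) * (a : ℤ) := by
      intro a
      rw [Finset.sum_const, Finset.card_univ, ZMod.card, nsmul_eq_mul]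
    have hcst : ∀ u : Y, u ∈ MulAction.fixedPoints (Multiplicative (ZMod p)) Y →
        ∀ i : ZMod p, u.1 i = u.1 0 := by
      intro u hu i
      have h0 : ((Multiplicative.ofAdd i) • u) = u := hu (Multiplicative.ofAdd i)
      have h1 : u.1 (0 + i) = u.1 0 := congrFun (congrArg Subtype.val h0) 0
      rw [zero_add] at h1
      exact h1
    refine ⟨fun u => ⟨u.1.1 0, ?_⟩, fun a => ⟨⟨fun _ => a.1, ?_⟩, ?_⟩, ?_, ?_⟩
    · have hs : (∑ i : ZMod p, ((u.1.1 i : ℤ))) = (p : ℤ) * ((u.1.1 0 : ℤ)) := by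
        rw [Finset.sum_congr rfl (fun i _ => by rw [hcst u.1 u.2 i])]
        exact hconstsum _
      have := u.1.2
      rwa [hs] at this
    · have := hconstsum a.1
      simpa [this] using a.2
    · intro g
      exact Subtype.ext (funext fun i => rfl)
    · rintro ⟨⟨f, hf⟩, hfix'⟩
      refine Subtype.ext (Subtype.ext (funext fun i => ?_))
      exact (hcst ⟨f, hf⟩ hfix' i).symm
    · rintro ⟨a, ha⟩; rfl
  -- Fermat
  have hNk : Nk A B p n = A.card ^ (p - 1) := by
    have h1 : p = (p - 1) + 1 := (Nat.succ_pred_eq_of_pos hp.pos).symm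
    conv_lhs => rw [h1]
    rw [Nk_card h]
  have hfermat : A.card ^ (p - 1) ≡ 1 [MOD p] := by
    have hne : ((A.card : ZMod p)) ≠ 0 := by
      rw [Ne, ZMod.natCast_eq_zero_iff]; exact hpc
    have := ZMod.pow_card_sub_one_eq_one hne
    have hcast : ((A.card ^ (p - 1) : ℕ) : ZMod p) = ((1 : ℕ) : ZMod p) := by
      push_cast; simpa using this
    exact (ZMod.natCast_eq_natCast_iff _ _ _).mp hcast
  have hfinal : Fintype.card {a : ↥A // n - (p : ℤ) * (a : ℤ) ∈ B} ≡ 1 [MOD p] := by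
    calc Fintype.card {a : ↥A // n - (p : ℤ) * (a : ℤ) ∈ B}
        = Nat.card (MulAction.fixedPoints (Multiplicative (ZMod p)) Y) := hfix.symm
      _ ≡ Nat.card Y [MOD p] := hmod.symm
      _ = A.card ^ (p - 1) := by rw [Nat.card_eq_fintype_card, hcardY, hNk]
      _ ≡ 1 [MOD p] := hfermat
  have hpos : 0 < Fintype.card {a : ↥A // n - (p : ℤ) * (a : ℤ) ∈ B} := by
    rcases Nat.eq_zero_or_pos (Fintype.card {a : ↥A // n - (p : ℤ) * (a : ℤ) ∈ B}) with h0 | h0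
    · exfalso
      rw [h0] at hfinal
      have : 0 % p = 1 % p := hfinal
      rw [Nat.zero_mod, Nat.mod_eq_of_lt hp.one_lt] at this
      exact zero_ne_one this
    · exact h0
  obtain ⟨⟨a, hb⟩⟩ := Fintype.card_pos_iff.mp hpos
  exact ⟨a.1, a.2, hb⟩
theorem tl_of_cover (h : Tl A B 1) (hne : A.Nonempty) (l : ℤ)
    (hex : ∀ n : ℤ, ∃ a ∈ A, n - l * a ∈ B) : Tl A B l := by
  have hm1 : ∀ n : ℤ, 1 ≤ Fintype.card {a : ↥A // n - l * (a : ℤ) ∈ B} := by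
    intro n
    obtain ⟨a, ha, hb⟩ := hex n
    exact Fintype.card_pos_iff.mpr ⟨⟨⟨a, ha⟩, hb⟩⟩
  have hsum : ∀ n : ℤ,
      (∑ x : ↥A, Fintype.card {a : ↥A // (n - (x : ℤ)) - l * (a : ℤ) ∈ B}) = A.card := by
    intro n
    have e1 : Fintype.card {q : ↥A × ↥A // (n - (q.1 : ℤ)) - l * (q.2 : ℤ) ∈ B}
        = ∑ x : ↥A, Fintype.card {a : ↥A // (n - (x : ℤ)) - l * (a : ℤ) ∈ B} := by
      rw [← Fintype.card_sigma]
      exact Fintype.card_congr (Equiv.subtypeProdEquivSigmaSubtype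
        (fun (x a : ↥A) => (n - (x : ℤ)) - l * (a : ℤ) ∈ B))
    have e2 : Fintype.card {q : ↥A × ↥A // (n - (q.1 : ℤ)) - l * (q.2 : ℤ) ∈ B}
        = ∑ a : ↥A, Fintype.card {x : ↥A // (n - l * (a : ℤ)) - (x : ℤ) ∈ B} := by
      rw [← Fintype.card_sigma]
      refine Fintype.card_congr (Equiv.trans (Equiv.trans ?_ (Equiv.subtypeProdEquivSigmaSubtype
        (fun (a x : ↥A) => (n - l * (a : ℤ)) - (x : ℤ) ∈ B))) (Equiv.refl _))
      refine Equiv.subtypeEquiv (Equiv.prodComm _ _) (fun q => ?_)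
      have harg : n - (q.1 : ℤ) - l * (q.2 : ℤ) = (n - l * (q.2 : ℤ)) - (q.1 : ℤ) := by ring
      simp only [Equiv.prodComm_apply, Prod.fst_swap, Prod.snd_swap, harg]
    rw [← e1, e2]
    have : ∀ a : ↥A, Fintype.card {x : ↥A // (n - l * (a : ℤ)) - (x : ℤ) ∈ B} = 1 :=
      fun a => card_res h (n - l * (a : ℤ))
    rw [Finset.sum_congr rfl (fun a _ => this a)]
    simp [Fintype.card_coe]
  have hall : ∀ n : ℤ, Fintype.card {a : ↥A // n - l * (a : ℤ) ∈ B} = 1 := by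
    have key : ∀ n : ℤ, ∀ x : ↥A,
        Fintype.card {a : ↥A // (n - (x : ℤ)) - l * (a : ℤ) ∈ B} = 1 := by
      intro n x
      by_contra hne1
      have h2 : 2 ≤ Fintype.card {a : ↥A // (n - (x : ℤ)) - l * (a : ℤ) ∈ B} := by
        have := hm1 (n - (x : ℤ))
        omega
      have hlt : (∑ _y : ↥A, 1) <
          ∑ y : ↥A, Fintype.card {a : ↥A // (n - (y : ℤ)) - l * (a : ℤ) ∈ B} := by
        refine Finset.sum_lt_sum (fun y _ => hm1 (n - (y : ℤ))) ⟨x, Finset.mem_univ x, ?_⟩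
        omega
      rw [hsum n] at hlt
      simp [Fintype.card_coe] at hlt
    intro n
    obtain ⟨a0, ha0⟩ := hne
    have := key (n + a0) ⟨a0, ha0⟩
    simpa using this
  intro n
  obtain ⟨⟨a, hab⟩, hu⟩ := Fintype.card_eq_one_iff.mp (hall n)
  refine ⟨((a : ℤ), n - l * (a : ℤ)), ⟨a.2, hab, by ring⟩, ?_⟩
  rintro ⟨x, y⟩ ⟨hx, hy, hxy⟩
  have hyx : y = n - l * x := by rw [hxy]; ring
  have : (⟨⟨x, hx⟩, by rw [← hyx]; exact hy⟩ :
      {a : ↥A // n - l * (a : ℤ) ∈ B}) = ⟨a, hab⟩ := hu _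
  have hxa : x = (a : ℤ) := congrArg (fun z => ((z.1 : ℤ)) ) this
  simp only [Prod.mk.injEq]
  exact ⟨hxa, by rw [hyx, hxa]⟩
theorem tl_image {l : ℤ} (hl : l ≠ 0) (c : ℤ) :
    Tl (A.image (fun a => l * a)) B c ↔ Tl A B (c * l) := by
  constructor
  · intro h n
    obtain ⟨q, ⟨hq1, hq2, hq3⟩, hu⟩ := h n
    obtain ⟨a0, ha0, ha0e⟩ := Finset.mem_image.mp hq1
    refine ⟨(a0, q.2), ⟨ha0, hq2, by rw [hq3, ← ha0e]; ring⟩, ?_⟩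
    rintro ⟨x, y⟩ ⟨hx, hy, hxy⟩
    have : ((l * x, y) : ℤ × ℤ) = q :=
      hu (l * x, y) ⟨Finset.mem_image.mpr ⟨x, hx, rfl⟩, hy, by rw [hxy]; ring⟩
    have h1 : l * x = q.1 := congrArg Prod.fst this
    have h2 : y = q.2 := congrArg Prod.snd this
    have hx0 : x = a0 := by
      apply mul_left_cancel₀ hl
      rw [h1, ← ha0e]
    simp [hx0, h2]
  · intro h n
    obtain ⟨q, ⟨hq1, hq2, hq3⟩, hu⟩ := h n
    refine ⟨(l * q.1, q.2), ⟨Finset.mem_image.mpr ⟨q.1, hq1, rfl⟩, hq2, by rw [hq3]; ring⟩, ?_⟩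
    rintro ⟨x, y⟩ ⟨hx, hy, hxy⟩
    obtain ⟨a0, ha0, ha0e⟩ := Finset.mem_image.mp hx
    have : ((a0, y) : ℤ × ℤ) = q :=
      hu (a0, y) ⟨ha0, hy, by rw [hxy, ← ha0e]; ring⟩
    have h1 : a0 = q.1 := congrArg Prod.fst this
    have h2 : y = q.2 := congrArg Prod.snd this
    have hx' : x = l * q.1 := by rw [← h1]; exact ha0e.symm
    simp [hx', h2]

theorem tl_pos (h : Tl A B 1) (hne : A.Nonempty) :
    ∀ N : ℕ, 1 ≤ N → Nat.Coprime N A.card → Tl A B (N : ℤ) := by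
  intro N
  induction N using Nat.strong_induction_on with
  | _ N ih =>
    intro hN1 hcop
    rcases eq_or_lt_of_le hN1 with h1 | h1
    · have : ((N : ℤ)) = 1 := by rw [← h1]; rfl
      rw [this]; exact h
    · set p := N.minFac with hp
      have hpprime : p.Prime := Nat.minFac_prime (by omega)
      have hpdvd : p ∣ N := Nat.minFac_dvd N
      set N' := N / p with hN'
      have hNeq : p * N' = N := Nat.mul_div_cancel' hpdvd
      have hN'lt : N' < N := Nat.div_lt_self (by omega) hpprime.one_lt
      have hN'pos : 1 ≤ N' := Nat.one_le_div_iff hpprime.pos |>.mpr (Nat.minFac_le (by omega))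
      have hN'dvd : N' ∣ N := ⟨p, by rw [← hNeq]; ring⟩
      have hcop' : Nat.Coprime N' A.card := Nat.Coprime.coprime_dvd_left hN'dvd hcop
      have hpc : ¬ p ∣ A.card :=
        (Nat.Prime.coprime_iff_not_dvd hpprime).mp (Nat.Coprime.coprime_dvd_left hpdvd hcop)
      have hTl' : Tl A B (N' : ℤ) := ih N' hN'lt hN'pos hcop'
      have hN'0 : ((N' : ℤ)) ≠ 0 := by positivity
      set A' := A.image (fun a => (N' : ℤ) * a) with hA'
      have hA'card : A'.card = A.card :=
        Finset.card_image_of_injective _ (mul_right_injective₀ hN'0)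
      have h1' : Tl A' B 1 := by
        rw [tl_image hN'0 1, one_mul]; exact hTl'
      have hne' : A'.Nonempty := hne.image _
      have hcov : ∀ n : ℤ, ∃ a ∈ A', n - (p : ℤ) * a ∈ B :=
        exists_rep h1' hpprime (by rw [hA'card]; exact hpc)
      have hTlp : Tl A' B (p : ℤ) := tl_of_cover h1' hne' _ hcov
      have := (tl_image hN'0 (p : ℤ)).mp hTlp
      have hcast : ((p : ℤ)) * ((N' : ℤ)) = ((N : ℤ)) := by
        rw [← hNeq]; push_cast; ring
      rwa [hcast] at this
theorem periodic (h : Tl A B 1) (hne : A.Nonempty) :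
    ∃ T : ℤ, 0 < T ∧ ∀ n : ℤ, n ∈ B ↔ n + T ∈ B := by
  set m0 := A.min' hne with hm0
  set m1 := A.max' hne with hm1
  set d : ℤ := m1 - m0 with hd
  have hd0 : 0 ≤ d := sub_nonneg.mpr (A.min'_le m1 (A.max'_mem hne))
  -- characterizations
  have char_fwd : ∀ y : ℤ, y ∈ B ↔ ¬ ∃ a ∈ A, a ≠ m0 ∧ y - (a - m0) ∈ B := by
    intro y
    obtain ⟨a, ⟨haA, haB⟩, hu⟩ := hrep h (y + m0)
    constructor
    · intro hy
      rintro ⟨a', ha'A, ha'ne, ha'B⟩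
      have h1 : a = m0 := Eq.symm <| hu m0 ⟨A.min'_mem hne, by simpa using hy⟩
      have h2 : a = a' := (hu a' ⟨ha'A, by
        have : y + m0 - a' = y - (a' - m0) := by ring
        rw [this]; exact ha'B⟩).symm
      exact ha'ne (by rw [← h2, h1])
    · intro hno
      by_cases ham : a = m0
      · have : y + m0 - a = y := by rw [ham]; ring
        rwa [this] at haB
      · exfalso
        exact hno ⟨a, haA, ham, by
          have : y - (a - m0) = y + m0 - a := by ring
          rw [this]; exact haB⟩
  have char_bwd : ∀ y : ℤ, y ∈ B ↔ ¬ ∃ a ∈ A, a ≠ m1 ∧ y + (m1 - a) ∈ B := by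
    intro y
    obtain ⟨a, ⟨haA, haB⟩, hu⟩ := hrep h (y + m1)
    constructor
    · intro hy
      rintro ⟨a', ha'A, ha'ne, ha'B⟩
      have h1 : a = m1 := Eq.symm <| hu m1 ⟨A.max'_mem hne, by simpa using hy⟩
      have h2 : a = a' := (hu a' ⟨ha'A, by
        have : y + m1 - a' = y + (m1 - a') := by ring
        rw [this]; exact ha'B⟩).symm
      exact ha'ne (by rw [← h2, h1])
    · intro hno
      by_cases ham : a = m1
      · have : y + m1 - a = y := by rw [ham]; ring
        rwa [this] at haB
      · exfalso
        exact hno ⟨a, haA, ham, by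
          have : y + (m1 - a) = y + m1 - a := by ring
          rw [this]; exact haB⟩
  -- determinism
  have fwd_det : ∀ x x' : ℤ,
      (∀ j : ℤ, 1 ≤ j → j ≤ d → ((x - j ∈ B) ↔ (x' - j ∈ B))) → (x ∈ B ↔ x' ∈ B) := by
    intro x x' hw
    rw [char_fwd x, char_fwd x']
    apply not_congr
    constructor
    · rintro ⟨a, haA, hane, haB⟩
      have hj1 : 1 ≤ a - m0 := by
        have := A.min'_le a haA
        omega
      have hj2 : a - m0 ≤ d := by
        have := A.le_max' a haA
        omega
      exact ⟨a, haA, hane, (hw (a - m0) hj1 hj2).mp haB⟩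
    · rintro ⟨a, haA, hane, haB⟩
      have hj1 : 1 ≤ a - m0 := by
        have := A.min'_le a haA
        omega
      have hj2 : a - m0 ≤ d := by
        have := A.le_max' a haA
        omega
      exact ⟨a, haA, hane, (hw (a - m0) hj1 hj2).mpr haB⟩
  have bwd_det : ∀ x x' : ℤ,
      (∀ j : ℤ, 1 ≤ j → j ≤ d → ((x + j ∈ B) ↔ (x' + j ∈ B))) → (x ∈ B ↔ x' ∈ B) := by
    intro x x' hw
    rw [char_bwd x, char_bwd x']
    apply not_congr
    constructor
    · rintro ⟨a, haA, hane, haB⟩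
      have hj1 : 1 ≤ m1 - a := by
        have := A.le_max' a haA
        omega
      have hj2 : m1 - a ≤ d := by
        have := A.min'_le a haA
        omega
      exact ⟨a, haA, hane, (hw (m1 - a) hj1 hj2).mp haB⟩
    · rintro ⟨a, haA, hane, haB⟩
      have hj1 : 1 ≤ m1 - a := by
        have := A.le_max' a haA
        omega
      have hj2 : m1 - a ≤ d := by
        have := A.min'_le a haA
        omega
      exact ⟨a, haA, hane, (hw (m1 - a) hj1 hj2).mpr haB⟩
  -- pigeonhole on window states
  obtain ⟨x, x', hxx, hg⟩ := Finite.exists_ne_map_eq_of_infinite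
    (f := fun x : ℤ => (fun j : ↥(Finset.Icc (1 : ℤ) d) =>
      if x - (j : ℤ) ∈ B then true else false))
  -- wlog x < x'
  have main : ∀ u v : ℤ, u < v →
      ((fun j : ↥(Finset.Icc (1 : ℤ) d) => if u - (j : ℤ) ∈ B then true else false)
        = (fun j : ↥(Finset.Icc (1 : ℤ) d) => if v - (j : ℤ) ∈ B then true else false)) →
      ∃ T : ℤ, 0 < T ∧ ∀ n : ℤ, n ∈ B ↔ n + T ∈ B := by
    intro u v huv hguv
    set T := v - u with hT
    have hT0 : 0 < T := by omega
    have W : ∀ j : ℤ, 1 ≤ j → j ≤ d → ((u - j ∈ B) ↔ (u - j + T ∈ B)) := by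
      intro j hj1 hj2
      have := congrFun hguv ⟨j, Finset.mem_Icc.mpr ⟨hj1, hj2⟩⟩
      have hiff : (u - j ∈ B) ↔ (v - j ∈ B) := by
        by_cases h1 : u - j ∈ B <;> by_cases h2 : v - j ∈ B <;> simp [h1, h2] at this ⊢
      have heq : v - j = u - j + T := by omega
      rwa [heq] at hiff
    -- propagate
    have prop : ∀ t : ℤ, ∀ j : ℤ, 1 ≤ j → j ≤ d → ((u + t - j ∈ B) ↔ (u + t - j + T ∈ B)) := by
      intro t
      induction t using Int.induction_on with
      | zero => intro j hj1 hj2; simpa using W j hj1 hj2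
      | succ k ihk =>
        intro j hj1 hj2
        rcases eq_or_lt_of_le hj1 with he | hgt
        · -- j = 1 : new point u + k
          have hnew : (u + (k : ℤ) ∈ B) ↔ (u + (k : ℤ) + T ∈ B) := by
            apply fwd_det
            intro j' hj'1 hj'2
            have e2 : u + (k : ℤ) + T - j' = u + (k : ℤ) - j' + T := by ring
            rw [e2]
            exact ihk j' hj'1 hj'2
          have e1 : u + ((k : ℤ) + 1) - j = u + (k : ℤ) := by omega
          rw [e1]; exact hnew
        · have := ihk (j - 1) (by omega) (by omega)
          have e1 : u + (k : ℤ) - (j - 1) = u + ((k : ℤ) + 1) - j := by ring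
          rwa [e1] at this
      | pred k ihk =>
        intro j hj1 hj2
        rcases eq_or_lt_of_le hj2 with he | hlt
        · -- j = d : new point u - (k+1) - d
          have hnew : (u + (-(k : ℤ) - 1) - d ∈ B) ↔ (u + (-(k : ℤ) - 1) - d + T ∈ B) := by
            apply bwd_det
            intro j' hj'1 hj'2
            have := ihk (d + 1 - j') (by omega) (by omega)
            have e1 : u + -(k : ℤ) - (d + 1 - j') = u + (-(k : ℤ) - 1) - d + j' := by ring
            have e2 : u + -(k : ℤ) - (d + 1 - j') + T = u + (-(k : ℤ) - 1) - d + T + j' := by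
              ring
            rwa [e2, e1] at this
          rw [he]
          exact hnew
        · have := ihk (j + 1) (by omega) (by omega)
          have e1 : u + -(k : ℤ) - (j + 1) = u + (-(k : ℤ) - 1) - j := by ring
          have e2 : u + -(k : ℤ) - (j + 1) + T = u + (-(k : ℤ) - 1) - j + T := by ring
          rwa [e2, e1] at this
    refine ⟨T, hT0, fun n => ?_⟩
    rcases lt_or_ge d 1 with hd1 | hd1
    · apply fwd_det
      intro j hj1 hj2
      exact absurd (hj1.trans hj2) (by omega)
    · have := prop (n - u + 1) 1 le_rfl hd1
      have e1 : u + (n - u + 1) - 1 = n := by ring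
      have e2 : u + (n - u + 1) - 1 + T = n + T := by ring
      rwa [e2, e1] at this
  rcases lt_or_gt_of_ne hxx with hlt | hgt
  · exact main x x' hlt hg
  · exact main x' x hgt hg.symm
theorem perZ {T : ℤ} (hper : ∀ n : ℤ, n ∈ B ↔ n + T ∈ B) :
    ∀ m n : ℤ, n ∈ B ↔ n + m * T ∈ B := by
  intro m
  induction m using Int.induction_on with
  | zero => intro n; simp
  | succ k ih =>
    intro n
    have e : n + ((k : ℤ) + 1) * T = (n + (k : ℤ) * T) + T := by ring
    rw [e, ← hper]
    exact ih n
  | pred k ih =>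
    intro n
    have e : n + (-(k : ℤ) - 1) * T + T = n + (-(k : ℤ)) * T := by ring
    rw [ih n, ← e, ← hper]

theorem tl_congr {T : ℤ} (hper : ∀ n : ℤ, n ∈ B ↔ n + T ∈ B) {l l' : ℤ}
    (hdvd : T ∣ (l' - l)) (h : Tl A B l') : Tl A B l := by
  obtain ⟨c, hc⟩ := hdvd
  have hshift : ∀ (a b : ℤ), b ∈ B → b + (l' - l) * a ∈ B := by
    intro a b hb
    have := (perZ hper (c * a) b).mp hb
    have e : b + c * a * T = b + (l' - l) * a := by rw [hc]; ring
    rwa [e] at this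
  have hshift' : ∀ (a b : ℤ), b ∈ B → b - (l' - l) * a ∈ B := by
    intro a b hb
    have := (perZ hper (-(c * a)) b).mp hb
    have e : b + -(c * a) * T = b - (l' - l) * a := by rw [hc]; ring
    rwa [e] at this
  intro n
  obtain ⟨q, ⟨hq1, hq2, hq3⟩, hu⟩ := h n
  refine ⟨(q.1, q.2 + (l' - l) * q.1), ⟨hq1, hshift q.1 q.2 hq2, by rw [hq3]; ring⟩, ?_⟩
  rintro ⟨x, y⟩ ⟨hx, hy, hxy⟩
  have : ((x, y - (l' - l) * x) : ℤ × ℤ) = q :=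
    hu _ ⟨hx, hshift' x y hy, by rw [hxy]; ring⟩
  have h1 : x = q.1 := congrArg Prod.fst this
  have h2 : y - (l' - l) * x = q.2 := congrArg Prod.snd this
  simp only [Prod.mk.injEq]
  exact ⟨h1, by rw [← h2, h1]; ring⟩
theorem tl_all (h : Tl A B 1) (hne : A.Nonempty) (l : ℤ)
    (hl : Int.gcd l (A.card : ℤ) = 1) : Tl A B l := by
  have hpos : ∀ l' : ℤ, 1 ≤ l' → Int.gcd l' (A.card : ℤ) = 1 → Tl A B l' := by
    intro l' hl'1 hl'g
    have h1 : (l'.toNat : ℤ) = l' := Int.toNat_of_nonneg (by omega)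
    have hcop : Nat.Coprime l'.toNat A.card := by
      have : l'.natAbs = l'.toNat := by omega
      have hg : l'.natAbs.gcd (A.card : ℤ).natAbs = 1 := hl'g
      rwa [this, Int.natAbs_natCast] at hg
    have := tl_pos h hne l'.toNat (by omega) hcop
    rwa [h1] at this
  rcases le_or_gt 1 l with hl1 | hl1
  · exact hpos l hl1 hl
  · -- l ≤ 0 : use periodicity
    obtain ⟨T, hT0, hper⟩ := periodic h hne
    have hcard1 : 1 ≤ (A.card : ℤ) := by
      have := Finset.card_pos.mpr hne
      omega
    set l' := l + (1 - l) * (T * (A.card : ℤ)) with hl'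
    have hl'1 : 1 ≤ l' := by
      have h1 : 1 ≤ T * (A.card : ℤ) := by nlinarith
      nlinarith
    have hl'g : Int.gcd l' (A.card : ℤ) = 1 := by
      rw [← Int.isCoprime_iff_gcd_eq_one] at hl ⊢
      have : l' = l + (A.card : ℤ) * ((1 - l) * T) := by rw [hl']; ring
      rw [this]
      exact hl.add_mul_left_left _
    have hTl' : Tl A B l' := hpos l' hl'1 hl'g
    refine tl_congr hper ?_ hTl'
    exact ⟨(1 - l) * (A.card : ℤ), by rw [hl']; ring⟩

end Tij

/-- Tijdeman's theorem: let `D ⊆ ℤ` be finite and `L ⊆ ℤ` with `D ⊕ L = ℤ`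
(every integer has a unique representation `d + y`, `d ∈ D`, `y ∈ L`) and
`0 ∈ D ∩ L`.  If `gcd(l, #D) = 1`, then `lD ⊕ L = ℤ`. -/
theorem stmt10 (D : Finset ℤ) (L : Set ℤ)
    (hD : (0 : ℤ) ∈ D) (hL : (0 : ℤ) ∈ L)
    (htile : ∀ n : ℤ, ∃! p : D × L, n = (p.1 : ℤ) + (p.2 : ℤ))
    (l : ℤ) (hl : Int.gcd l (D.card : ℤ) = 1) :
    ∀ n : ℤ, ∃! p : D × L, n = l * (p.1 : ℤ) + (p.2 : ℤ) := by
  have h1 : Tij.Tl D L 1 := by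
    intro n
    obtain ⟨p, hp, hu⟩ := htile n
    refine ⟨((p.1 : ℤ), (p.2 : ℤ)), ⟨p.1.2, p.2.2, by rw [hp]; ring⟩, ?_⟩
    rintro ⟨x, y⟩ ⟨hx, hy, hxy⟩
    have : ((⟨x, hx⟩, ⟨y, hy⟩) : D × L) = p := hu _ (by simpa using hxy)
    rw [← this]
  have hTl : Tij.Tl D L l := Tij.tl_all h1 ⟨0, hD⟩ l hl
  intro n
  obtain ⟨q, ⟨hq1, hq2, hq3⟩, hu⟩ := hTl n
  refine ⟨(⟨q.1, hq1⟩, ⟨q.2, hq2⟩), hq3, ?_⟩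
  rintro ⟨⟨x, hx⟩, ⟨y, hy⟩⟩ hxy
  have : ((x, y) : ℤ × ℤ) = q := hu _ ⟨hx, hy, hxy⟩
  have h1 : x = q.1 := congrArg Prod.fst this
  have h2 : y = q.2 := congrArg Prod.snd this
  subst h1; subst h2
  rfl
end

section
/- With s_k = τ_N(b_1⋯b_k) − τ_N(N t_k), 𝔫_k = max{j ≥ k : s_k ≥ s_j}, and 𝐛_k = b'_1⋯b'_k (the N-free parts multiplied), suppose s_j > s_i. Then: (i) 𝔫_j ≥ 𝔫_i and 𝐛_{𝔫_i} divides 𝐛_{𝔫_j}; (ii) for any λ₁ ∈ N^{s_i} 𝐛_{𝔫_i}(ℤ\Nℤ) and λ₂ ∈ N^{s_j} 𝐛_{𝔫_j}(ℤ\Nℤ), one has λ₁ + λ₂ ∈ N^{s_i} 𝐛_{𝔫_i}(ℤ\Nℤ). -/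
/-- Lemma 4.2: let `N` be a prime, `|b k| ≥ 2`, `t k ≠ 0`,
`s k = τ_N(b 0 ⋯ b k) − τ_N(N t k)`, `b' k = b k / N^{τ_N(b k)}`,
`𝐛 k = b' 0 ⋯ b' k` (indices from `0`), and let `n k = max{j ≥ k : s k ≥ s j}`
(assumed attained, encoded by `hn`).  If `s j > s i` then:
(i) `n j ≥ n i` and `𝐛_{n i} ∣ 𝐛_{n j}`;
(ii) for any `λ₁ ∈ N^{s i} 𝐛_{n i}(ℤ \ Nℤ)` and `λ₂ ∈ N^{s j} 𝐛_{n j}(ℤ \ Nℤ)`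
one has `λ₁ + λ₂ ∈ N^{s i} 𝐛_{n i}(ℤ \ Nℤ)`. -/
theorem stmt13 (N : ℕ) (hN : N.Prime) (b t : ℕ → ℤ)
    (hb : ∀ k, 2 ≤ |b k|) (ht : ∀ k, t k ≠ 0)
    (s : ℕ → ℤ)
    (hs : ∀ k, s k = (padicValInt N (∏ i ∈ Finset.range (k + 1), b i) : ℤ)
        - (padicValInt N ((N : ℤ) * t k) : ℤ))
    (bp : ℕ → ℤ) (hbp : ∀ k, b k = (N : ℤ) ^ (padicValInt N (b k)) * bp k)
    (Bb : ℕ → ℤ) (hBb : ∀ k, Bb k = ∏ i ∈ Finset.range (k + 1), bp i)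
    (n : ℕ → ℕ)
    (hn : ∀ k, k ≤ n k ∧ s (n k) ≤ s k ∧ ∀ j, k ≤ j → s j ≤ s k → j ≤ n k)
    (i j : ℕ) (hij : s i < s j) :
    (n i ≤ n j ∧ Bb (n i) ∣ Bb (n j)) ∧
      ∀ l₁ l₂ : ℝ,
        (∃ m : ℤ, ¬ (N : ℤ) ∣ m ∧ l₁ = (N : ℝ) ^ (s i) * (Bb (n i) : ℝ) * (m : ℝ)) →
        (∃ m : ℤ, ¬ (N : ℤ) ∣ m ∧ l₂ = (N : ℝ) ^ (s j) * (Bb (n j) : ℝ) * (m : ℝ)) →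
        ∃ m : ℤ, ¬ (N : ℤ) ∣ m ∧
          l₁ + l₂ = (N : ℝ) ^ (s i) * (Bb (n i) : ℝ) * (m : ℝ) := by
  obtain ⟨hi1, hi2, hi3⟩ := hn i
  obtain ⟨hj1, hj2, hj3⟩ := hn j
  have hnij : n i ≤ n j := by
    by_cases h : j ≤ n i
    · exact hj3 (n i) h (le_of_lt (lt_of_le_of_lt hi2 hij))
    · omega
  have hdvd : Bb (n i) ∣ Bb (n j) := by
    rw [hBb, hBb]
    exact Finset.prod_dvd_prod_of_subset _ _ _ (Finset.range_subset_range.2 (by omega))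
  refine ⟨⟨hnij, hdvd⟩, ?_⟩
  rintro l₁ l₂ ⟨m₁, hm₁, rfl⟩ ⟨m₂, hm₂, rfl⟩
  obtain ⟨c, hc⟩ := hdvd
  set d := (s j - s i).toNat with hd
  have hdz : (d : ℤ) = s j - s i := Int.toNat_of_nonneg (by omega)
  have hNne : (N:ℝ) ≠ 0 := by exact_mod_cast hN.pos.ne'
  refine ⟨m₁ + N ^ d * c * m₂, ?_, ?_⟩
  · intro h
    have hX : (N:ℤ) ∣ (N:ℤ) ^ d * c * m₂ :=
      Dvd.dvd.mul_right (Dvd.dvd.mul_right (dvd_pow_self _ (by omega)) _) _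
    exact hm₁ (by simpa using dvd_sub h hX)
  · have hpow : (N:ℝ) ^ (s j) = (N:ℝ) ^ (s i) * (N:ℝ) ^ d := by
      rw [← zpow_natCast (N:ℝ) d, ← zpow_add₀ hNne]
      congr 1; omega
    rw [hpow, hc]
    push_cast
    ring
end

section
/- Suppose s_i ≠ s_j for all i ≠ j, where s_k = τ_N(b_1⋯b_k) − τ_N(N t_k) with N prime, |b_k| ≥ 2, b_k > (N−1)t_k for large k, and {t_k} a bounded sequence of positive integers. Then the quantity 𝔫_k − k is uniformly bounded in k, where 𝔫_k = max{j ≥ k : s_k ≥ s_j}. -/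
/-- Lemma 4.1: let `N` be a prime, `|b k| ≥ 2`, `{t k}` a bounded sequence of
positive integers with `b k > (N−1) t k` for all `k ≥ m₀`, and
`s k = τ_N(b 0 ⋯ b k) − τ_N(N t k)` (indices from `0`).  Let
`n k = max{j ≥ k : s k ≥ s j}` (assumed attained, encoded by `hn`).  If the
`s k` are pairwise distinct, then `n k − k` is uniformly bounded. -/
theorem stmt14 (N : ℕ) (hN : N.Prime) (b t : ℕ → ℤ)
    (hb : ∀ k, 2 ≤ |b k|) (ht : ∀ k, 1 ≤ t k) (htbd : ∃ M : ℤ, ∀ k, t k ≤ M)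
    (m₀ : ℕ) (hbt : ∀ k, m₀ ≤ k → ((N : ℤ) - 1) * t k < b k)
    (s : ℕ → ℤ)
    (hs : ∀ k, s k = (padicValInt N (∏ i ∈ Finset.range (k + 1), b i) : ℤ)
        - (padicValInt N ((N : ℤ) * t k) : ℤ))
    (n : ℕ → ℕ)
    (hn : ∀ k, k ≤ n k ∧ s (n k) ≤ s k ∧ ∀ j, k ≤ j → s j ≤ s k → j ≤ n k)
    (hdist : ∀ i j : ℕ, i ≠ j → s i ≠ s j) :
    ∃ C : ℕ, ∀ k, n k ≤ k + C := by
  haveI : Fact N.Prime := ⟨hN⟩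
  obtain ⟨M, hM⟩ := htbd
  have hN2 : 2 ≤ N := hN.two_le
  have hM1 : 1 ≤ M := le_trans (ht 0) (hM 0)
  have hb0 : ∀ i, b i ≠ 0 := by
    intro i h
    have := hb i
    rw [h] at this
    simp at this
  set L : ℕ := N * M.toNat with hLdef
  -- bound on valuation of N * t k
  have hvt : ∀ k, padicValInt N ((N : ℤ) * t k) ≤ L := by
    intro k
    set v := padicValInt N ((N : ℤ) * t k) with hv
    have ht0 : (0:ℤ) < t k := ht k
    have hNt0 : (0:ℤ) < (N : ℤ) * t k := by positivity
    have hdvd : (N : ℤ) ^ v ∣ (N : ℤ) * t k := padicValInt_dvd _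
    have h1 : (N : ℤ) ^ v ≤ (N : ℤ) * t k := Int.le_of_dvd hNt0 hdvd
    have h2 : (v : ℤ) < (N : ℤ) ^ v := by
      have := Nat.lt_pow_self (by omega : 1 < N) (n := v)
      exact_mod_cast this
    have h3 : (N : ℤ) * t k ≤ (N : ℤ) * M := by
      have := hM k
      nlinarith
    have h4 : ((L : ℤ)) = (N : ℤ) * M := by
      rw [hLdef]
      push_cast
      rw [Int.toNat_of_nonneg (by omega)]
    have : (v : ℤ) < (L : ℤ) := by omega
    exact_mod_cast this.le
  have hP0 : ∀ S : Finset ℕ, (∏ l ∈ S, b l) ≠ 0 :=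
    fun S => Finset.prod_ne_zero_iff.mpr fun i _ => hb0 i
  refine ⟨(L + 1) * (L + 1), fun k => ?_⟩
  obtain ⟨hk1, hk2, -⟩ := hn k
  -- valuation of the tail
  set d : ℕ → ℕ := fun i => padicValInt N (∏ l ∈ Finset.Ico (k + 1) (i + 1), b l) with hd
  have hsplit : ∀ i, k ≤ i →
      padicValInt N (∏ l ∈ Finset.range (i + 1), b l)
        = padicValInt N (∏ l ∈ Finset.range (k + 1), b l) + d i := by
    intro i hi
    rw [← Finset.prod_range_mul_prod_Ico b (by omega : k + 1 ≤ i + 1)]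
    exact padicValInt.mul (hP0 _) (hP0 _)
  -- s formula for i ≥ k
  have hsf : ∀ i, k ≤ i → s i = (padicValInt N (∏ l ∈ Finset.range (k + 1), b l) : ℤ)
      + (d i : ℤ) - (padicValInt N ((N : ℤ) * t i) : ℤ) := by
    intro i hi
    rw [hs i, hsplit i hi]
    push_cast
    ring
  -- d (n k) ≤ L
  have hdnk : d (n k) ≤ L := by
    have h1 := hsf (n k) hk1
    have h2 := hsf k le_rfl
    have h3 : d k = 0 := by simp [hd]
    have h4 := hvt (n k)
    rw [h1, h2, h3] at hk2
    push_cast at hk2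
    omega
  -- d i ≤ d (n k) for k ≤ i ≤ n k
  have hdmono : ∀ i, k ≤ i → i ≤ n k → d i ≤ d (n k) := by
    intro i hki hink
    have : (∏ l ∈ Finset.Ico (k + 1) (i + 1), b l) * ∏ l ∈ Finset.Ico (i + 1) (n k + 1), b l
        = ∏ l ∈ Finset.Ico (k + 1) (n k + 1), b l :=
      Finset.prod_Ico_consecutive b (by omega) (by omega)
    have h2 : d (n k) = d i + padicValInt N (∏ l ∈ Finset.Ico (i + 1) (n k + 1), b l) := by
      rw [hd]
      simp only
      rw [← this]
      exact padicValInt.mul (hP0 _) (hP0 _)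
    omega
  -- pigeonhole
  have hcard : (Finset.Icc k (n k)).card ≤ ((Finset.range (L + 1)) ×ˢ (Finset.range (L + 1))).card := by
    apply Finset.card_le_card_of_injOn
      (fun i => (d i, padicValInt N ((N : ℤ) * t i)))
    · intro i hi
      simp only [Finset.mem_coe, Finset.mem_Icc] at hi
      simp only [Finset.mem_coe, Finset.mem_product, Finset.mem_range]
      exact ⟨by have := hdmono i hi.1 hi.2; omega, by have := hvt i; omega⟩
    · intro i hi j hj hij
      simp only [Finset.mem_coe, Finset.mem_Icc] at hi hj
      simp only [Prod.mk.injEq] at hij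
      by_contra hne
      exact hdist i j hne (by rw [hsf i hi.1, hsf j hj.1, hij.1, hij.2])
  rw [Nat.card_Icc, Finset.card_product, Finset.card_range] at hcard
  omega
end

section
/- Let N ≥ 2 be a prime. Suppose x is a real number of the form x = z₀ + a/N + c/N^ω where z₀ ∈ ℤ, a ∈ {0,1,...,N−1}, ω ≥ 2, and c is an integer with 1 ≤ c ≤ N^{ω−1} − 1, and let y be a real number with |y| < N/(N^ω(N+1)). Then the distance from x + y to the set {l/N : l ∈ ℤ, N ∤ l} is at least 1/(N^ω(N+1)). -/
/-- The separation estimate of Proposition 4.9: let `N` be a prime,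
`x = z₀ + a/N + c/N^ω` with `z₀ ∈ ℤ`, `a ∈ {0,…,N−1}`, `ω ≥ 2`,
`1 ≤ c ≤ N^{ω−1} − 1`, and let `|y| < N/(N^ω(N+1))`.  Then the distance from
`x + y` to `{l/N : l ∈ ℤ, N ∤ l}` is at least `1/(N^ω(N+1))`. -/
theorem stmt16 (N : ℕ) (hN : N.Prime) (z₀ : ℤ) (a : ℕ) (ha : a < N)
    (ω : ℕ) (hω : 2 ≤ ω) (c : ℤ) (hc1 : 1 ≤ c) (hc2 : c ≤ (N : ℤ) ^ (ω - 1) - 1)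
    (x y : ℝ)
    (hx : x = (z₀ : ℝ) + (a : ℝ) / (N : ℝ) + (c : ℝ) / (N : ℝ) ^ ω)
    (hy : |y| < (N : ℝ) / ((N : ℝ) ^ ω * ((N : ℝ) + 1))) :
    ∀ l : ℤ, ¬ (N : ℤ) ∣ l →
      1 / ((N : ℝ) ^ ω * ((N : ℝ) + 1)) ≤ |x + y - (l : ℝ) / (N : ℝ)| := by
  intro l _
  have hN2 : 2 ≤ (N : ℤ) := by exact_mod_cast hN.two_le
  have hNR : (0:ℝ) < N := by
    have := hN.two_le; positivity
  set m : ℤ := z₀ * N + a - l with hm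
  set k : ℤ := m * (N:ℤ)^(ω-1) + c with hk
  have hpow : (N:ℝ)^ω = (N:ℝ)^(ω-1) * N := by
    rw [← pow_succ]; congr 1; omega
  have hNpow1 : (1:ℤ) ≤ (N:ℤ)^(ω-1) := by
    have := pow_pos (show (0:ℤ) < N by omega) (ω-1); omega
  have hk1 : 1 ≤ |k| := by
    have hk0 : k ≠ 0 := by
      rcases lt_trichotomy m 0 with h | h | h
      · have : k ≤ -1 := by nlinarith
        omega
      · have : k = c := by rw [hk, h]; ring
        omega
      · have : 1 ≤ k := by nlinarith
        omega
    exact Int.one_le_abs hk0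
  have hxl : x - (l:ℝ) / N = (k:ℝ) / (N:ℝ)^ω := by
    rw [hx, hk, hm]
    push_cast
    rw [hpow]
    field_simp
    ring
  have hpowR : (0:ℝ) < (N:ℝ)^ω := by positivity
  have habs : (1:ℝ)/(N:ℝ)^ω ≤ |x - (l:ℝ)/N| := by
    rw [hxl, abs_div, abs_of_pos hpowR]
    gcongr
    exact_mod_cast hk1
  have htri : |x - (l:ℝ)/N| - |y| ≤ |x + y - (l:ℝ)/N| := by
    have := abs_sub_abs_le_abs_sub (x - (l:ℝ)/N) (-y)
    simp only [abs_neg] at this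
    calc |x - (l:ℝ)/N| - |y| ≤ |x - (l:ℝ)/N - -y| := this
      _ = |x + y - (l:ℝ)/N| := by ring_nf
  have key : 1 / ((N:ℝ)^ω * ((N:ℝ)+1)) = (1:ℝ)/(N:ℝ)^ω - (N:ℝ)/((N:ℝ)^ω*((N:ℝ)+1)) := by
    field_simp
    ring
  linarith [habs, htri, hy]
end
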